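/- arXiv:1304.0176 — 6 statements merged into one kernel-verified Lean document; each statement's English description precedes it below -/
import Mathlib

section
/- Let X be a complex topological vector space, T a continuous linear operator on X, and x ∈ X. If the closure of the set {λ T^n x : λ ∈ 𝕋, n ≥ 0} has nonempty interior, then {λ T^n x : λ ∈ 𝕋, n ≥ 0} is dense in X. -/
/-!
Write `F` for the closure of `𝕋 · Orb(T, x)`. Passing to the separation quotient, we may assume
`X` is Hausdorff. If `X = ℂ ∙ w`, then `T` is a scalar `μ`; identifying `X` with `ℂ` and `x`
with `1`, the set `𝕋 · Orb(T, x)` is the union of the circles of radii `|μ|ⁿ`, and the closure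
of such a union has empty interior (unless `X = 0`).

Otherwise every line is closed and nowhere dense, so discarding the first orbit points does not
shrink `int F`; replacing `x` by a suitable `Tⁿ x` we get `x ∈ int F` and
`x ∈ closure (𝕋 · Orb(T, Tᵐ x))` for every `m`. We then follow Bourdon and Feldman. For `S`
commuting with `T`, either `S x ∈ F` and `S F ⊆ F`, or `S x ∉ F` and `S F ⊆ closure Fᶜ`.
Scalars near `1` fix `F`, hence so do their powers, which are all nonzero scalars. Each `T - β`
has dense range: on the quotient by the closure of its range `T` acts as the scalar `β`, so that
quotient is `0` by the first case. A connectedness argument in `β` then gives `(T - β) x ∈ F`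
for every `β`; factoring polynomials over `ℂ` gives `p(T) x ∈ F` for every `p`, and these
vectors are dense.
-/

open Filter Topology
open Set Pointwise

theorem Complex.exists_mem_nhds_one_pow_eq {c : ℂ} (hc : c ≠ 0) {U : Set ℂ} (hU : U ∈ 𝓝 1) :
    ∃ w ∈ U, ∃ k : ℕ, w ^ k = c := by
  have hroot : Tendsto (fun k : ℕ ↦ c ^ ((k : ℂ)⁻¹)) atTop (𝓝 1) := by
    simpa [Function.comp_def] using
      (continuousAt_const_cpow hc (b := 0)).tendsto.comp tendsto_inv_atTop_nhds_zero_nat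
  obtain ⟨k, hkU, hk⟩ := ((hroot.eventually hU).and (eventually_ne_atTop 0)).exists
  exact ⟨_, hkU, k, Complex.cpow_nat_inv_pow c hk⟩

theorem Real.countable_closure_range_pow {r : ℝ} (hr : 0 ≤ r) :
    (closure (range (r ^ · : ℕ → ℝ))).Countable := by
  rcases lt_or_ge 1 r with h1 | h1
  · have hproper : IsProperMap (r ^ · : ℕ → ℝ) := isProperMap_iff_tendsto_cocompact.2
      ⟨continuous_of_discreteTopology, by
        rw [cocompact_eq_atTop]
        exact (tendsto_pow_atTop_atTop_of_one_lt h1).mono_right atTop_le_cocompact⟩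
    rw [hproper.isClosedMap.isClosed_range.closure_eq]
    exact countable_range _
  · obtain ⟨L, hL⟩ : ∃ L, Tendsto (r ^ · : ℕ → ℝ) atTop (𝓝 L) := by
      rcases h1.lt_or_eq with h1 | rfl
      · exact ⟨0, tendsto_pow_atTop_nhds_zero_of_lt_one hr h1⟩
      · exact ⟨1, by simp⟩
    exact ((countable_range _).insert L).mono
      (closure_minimal (subset_insert _ _) hL.isCompact_insert_range.isClosed)

theorem Complex.interior_norm_preimage_eq_empty {s : Set ℝ} (hs : s.Countable) :
    interior (norm ⁻¹' s : Set ℂ) = ∅ := by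
  refine eq_empty_of_forall_notMem fun w hw ↦ ?_
  -- the norm restricted to the real line `g` through `w` is `|·|`
  set g : ℝ → ℂ := fun t ↦ t * Complex.exp (w.arg * Complex.I)
  have hg : Continuous g := by fun_prop
  have habs : {t : ℝ | |t| ∈ s}.Countable :=
    (hs.union (hs.image Neg.neg)).mono fun t ht ↦ by
      rcases abs_choice t with h | h
      · exact Or.inl (h ▸ ht)
      · exact Or.inr ⟨|t|, ht, by rw [h, neg_neg]⟩
  obtain ⟨t, ht, hts⟩ := ((habs.dense_compl ℝ).inter_open_nonempty _
    (isOpen_interior.preimage hg) ⟨‖w‖, by simpa [g, Complex.norm_mul_exp_arg_mul_I] using hw⟩)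
  apply hts
  simpa [g, norm_mul, Complex.norm_exp_ofReal_mul_I] using interior_subset ht

theorem IsOpenMap.nonempty_interior_closure_image {α β : Type*} [TopologicalSpace α]
    [TopologicalSpace β] {f : α → β} (hfo : IsOpenMap f) (hfc : Continuous f) {s : Set α}
    (hs : (interior (closure s)).Nonempty) : (interior (closure (f '' s))).Nonempty :=
  (hs.image f).mono <| interior_maximal
    ((image_mono interior_subset).trans (image_closure_subset_closure_image hfc))
    (hfo _ isOpen_interior)

open Polynomial in
theorem Polynomial.commute_aeval_self {R A : Type*} [CommSemiring R] [Semiring A] [Algebra R A]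
    (a : A) (p : R[X]) : Commute (aeval a p) a := by
  simpa using (Commute.all p X).map (aeval a)

theorem Commute.apply_pow_apply {R E : Type*} [Semiring R] [AddCommMonoid E] [Module R E]
    [TopologicalSpace E] {S T : E →L[R] E} (h : Commute S T) (n : ℕ) (y : E) :
    S ((T ^ n) y) = (T ^ n) (S y) :=
  DFunLike.congr_fun (h.pow_right n).eq y

section CircleOrbit

variable {E : Type*} [AddCommGroup E] [Module ℂ E] [TopologicalSpace E]

def circleOrbit (T : E →L[ℂ] E) (x : E) : Set E :=
  {y | ∃ l : ℂ, ‖l‖ = 1 ∧ ∃ n : ℕ, y = l • (T ^ n) x}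

theorem image_circleOrbit {E' : Type*} [AddCommGroup E'] [Module ℂ E'] [TopologicalSpace E']
    {F : Type*} [FunLike F E E'] [LinearMapClass F ℂ E E'] {T : E →L[ℂ] E} {S : E' →L[ℂ] E'}
    (π : F) (h : Function.Semiconj π T S) (x : E) :
    π '' circleOrbit T x = circleOrbit S (π x) := by
  have hpow (n : ℕ) (y : E) : π ((T ^ n) y) = (S ^ n) (π y) := by
    simp only [FunLike.coe_pow_eq_iterate, (h.iterate_right n) y]
  ext y
  constructor
  · rintro ⟨-, ⟨l, hl, n, rfl⟩, rfl⟩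
    exact ⟨l, hl, n, by rw [map_smul, hpow]⟩
  · rintro ⟨l, hl, n, rfl⟩
    exact ⟨l • (T ^ n) x, ⟨l, hl, n, rfl⟩, by rw [map_smul, hpow]⟩

variable {T : E →L[ℂ] E} {x : E}

theorem self_mem_circleOrbit : x ∈ circleOrbit T x :=
  ⟨1, norm_one, 0, by simp⟩

theorem circleOrbit_pow_apply_subset (m : ℕ) : circleOrbit T ((T ^ m) x) ⊆ circleOrbit T x := by
  rintro - ⟨l, hl, n, rfl⟩
  exact ⟨l, hl, n + m, by rw [pow_add]; rfl⟩

end CircleOrbit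

theorem Complex.interior_closure_circleOrbit_smul_one_eq_empty (μ : ℂ) :
    interior (closure (circleOrbit (μ • 1 : ℂ →L[ℂ] ℂ) 1)) = ∅ := by
  have hsub : circleOrbit (μ • 1 : ℂ →L[ℂ] ℂ) 1 ⊆ norm ⁻¹' range (‖μ‖ ^ · : ℕ → ℝ) := by
    rintro - ⟨l, hl, n, rfl⟩
    exact ⟨n, by simp [smul_pow, hl]⟩
  refine subset_empty_iff.1 <| (interior_mono ?_).trans (Complex.interior_norm_preimage_eq_empty
    (Real.countable_closure_range_pow (norm_nonneg μ))).subset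
  exact closure_minimal (hsub.trans (preimage_mono subset_closure))
    (isClosed_closure.preimage continuous_norm)

theorem subsingleton_of_nonempty_interior_closure_circleOrbit_smul_one {E : Type*}
    [AddCommGroup E] [Module ℂ E] [TopologicalSpace E] [IsTopologicalAddGroup E]
    [ContinuousSMul ℂ E] [T2Space E] (μ : ℂ) (z : E)
    (h : (interior (closure (circleOrbit (μ • 1 : E →L[ℂ] E) z))).Nonempty) : Subsingleton E := by
  by_contra hE
  rw [not_subsingleton_iff_nontrivial] at hE
  have hspan : ℂ ∙ z = ⊤ := by
    refine Submodule.eq_top_of_nonempty_interior' _ (h.mono (interior_mono ?_))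
    refine closure_minimal ?_ (Submodule.closed_of_finiteDimensional _)
    rintro - ⟨l, -, n, rfl⟩
    simpa [smul_pow, smul_smul] using
      Submodule.smul_mem _ (l * μ ^ n) (Submodule.mem_span_singleton_self z)
  have hz : z ≠ 0 := by
    rintro rfl
    exact bot_ne_top ((Submodule.span_zero_singleton ℂ (M := E)).symm.trans hspan)
  let e : ℂ ≃L[ℂ] E := ((LinearEquiv.toSpanNonzeroSingleton ℂ E z hz).trans
    (LinearEquiv.ofTop _ hspan)).toContinuousLinearEquiv
  have he : e.symm z = 1 := by
    rw [ContinuousLinearEquiv.symm_apply_eq]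
    simp [e]
  have hsemiconj : Function.Semiconj e.symm (μ • 1 : E →L[ℂ] E) (μ • 1 : ℂ →L[ℂ] ℂ) :=
    fun y ↦ by simp
  have := e.symm.toHomeomorph.isOpenMap.nonempty_interior_closure_image e.symm.continuous h
  rw [ContinuousLinearEquiv.coe_toHomeomorph, image_circleOrbit e.symm hsemiconj, he,
    Complex.interior_closure_circleOrbit_smul_one_eq_empty] at this
  exact not_nonempty_empty this

theorem ContinuousLinearMap.exists_eq_smul_one_of_span_singleton_eq_top {R E : Type*}
    [CommSemiring R] [AddCommMonoid E] [Module R E] [TopologicalSpace E]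
    [ContinuousConstSMul R E] {w : E} (hw : R ∙ w = ⊤) (T : E →L[R] E) : ∃ μ : R, T = μ • 1 := by
  obtain ⟨μ, hμ⟩ := Submodule.mem_span_singleton.1 (hw ▸ Submodule.mem_top : T w ∈ R ∙ w)
  refine ⟨μ, ContinuousLinearMap.ext fun y ↦ ?_⟩
  obtain ⟨a, rfl⟩ := Submodule.mem_span_singleton.1 (hw ▸ Submodule.mem_top : y ∈ R ∙ w)
  simp [← hμ, smul_smul, mul_comm]

section OrbitClosure

open Polynomial

variable {E : Type*} [AddCommGroup E] [Module ℂ E] [TopologicalSpace E]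
  [IsTopologicalAddGroup E] [ContinuousSMul ℂ E] {T : E →L[ℂ] E} {x : E}

theorem mapsTo_smul_pow_closure_circleOrbit {l : ℂ} (hl : ‖l‖ = 1) (n : ℕ) :
    MapsTo (fun y ↦ l • (T ^ n) y) (closure (circleOrbit T x)) (closure (circleOrbit T x)) := by
  refine MapsTo.closure ?_ (by fun_prop)
  rintro - ⟨m, hm, k, rfl⟩
  exact ⟨l * m, by rw [norm_mul, hl, hm, one_mul], n + k, by
    simp only [map_smul, smul_smul, pow_add]; rfl⟩

theorem smul_mem_interior_closure_circleOrbit {l : ℂ} (hl : ‖l‖ = 1) {y : E}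
    (hy : y ∈ interior (closure (circleOrbit T x))) :
    l • y ∈ interior (closure (circleOrbit T x)) := by
  have hl0 : l ≠ 0 := by rintro rfl; simp at hl
  have hsub : l • closure (circleOrbit T x) ⊆ closure (circleOrbit T x) := by
    rw [← image_smul]
    simpa using (mapsTo_smul_pow_closure_circleOrbit (x := x) hl 0).image_subset
  exact interior_mono hsub (by rw [interior_smul₀ hl0]; exact smul_mem_smul_set hy)

theorem mapsTo_closure_circleOrbit_of_commute {S : E →L[ℂ] E} (hS : Commute S T)
    (hSx : S x ∈ closure (circleOrbit T x)) :
    MapsTo S (closure (circleOrbit T x)) (closure (circleOrbit T x)) := by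
  refine MapsTo.closure_left ?_ S.continuous isClosed_closure
  rintro - ⟨l, hl, n, rfl⟩
  rw [map_smul, hS.apply_pow_apply]
  exact mapsTo_smul_pow_closure_circleOrbit hl n hSx

theorem smul_mem_closure_circleOrbit (hx : x ∈ interior (closure (circleOrbit T x))) (c : ℂ)
    {f : E} (hf : f ∈ closure (circleOrbit T x)) : c • f ∈ closure (circleOrbit T x) := by
  have hnear : ∀ᶠ w in 𝓝 (1 : ℂ), MapsTo (w • ·) (closure (circleOrbit T x))
      (closure (circleOrbit T x)) := by
    have hcont : Tendsto (fun w : ℂ ↦ w • x) (𝓝 1) (𝓝 x) := by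
      simpa using (show Continuous fun w : ℂ ↦ w • x by fun_prop).tendsto 1
    filter_upwards [hcont.eventually_mem (mem_interior_iff_mem_nhds.1 hx)] with w hw y hy
    simpa using mapsTo_closure_circleOrbit_of_commute (S := w • 1)
      ((Commute.one_left T).smul_left w) (by simpa using hw) hy
  have hne : ∀ c : ℂ, c ≠ 0 → c • f ∈ closure (circleOrbit T x) := by
    intro c hc
    obtain ⟨w, hw, k, rfl⟩ := Complex.exists_mem_nhds_one_pow_eq hc hnear
    simpa only [smul_iterate] using hw.iterate k hf
  exact closure_minimal hne (isClosed_closure.preimage (continuous_id.smul continuous_const))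
    (dense_compl_singleton (0 : ℂ) c)

theorem interior_closure_circleOrbit_subset_apply [T2Space E] (hlines : ∀ y : E, ℂ ∙ y ≠ ⊤) :
    interior (closure (circleOrbit T x)) ⊆ interior (closure (circleOrbit T (T x))) := by
  have hline : interior ((ℂ ∙ x : Submodule ℂ E) : Set E) = ∅ :=
    not_nonempty_iff_eq_empty.1 fun h ↦ hlines x (Submodule.eq_top_of_nonempty_interior' _ h)
  have hsub : circleOrbit T x ⊆ closure (circleOrbit T (T x)) ∪ (ℂ ∙ x : Submodule ℂ E) := by
    rintro - ⟨l, hl, _ | n, rfl⟩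
    · exact Or.inr (by simpa using Submodule.smul_mem _ l (Submodule.mem_span_singleton_self x))
    · exact Or.inl (subset_closure ⟨l, hl, n, by rw [pow_succ]; rfl⟩)
  calc interior (closure (circleOrbit T x))
      ⊆ interior (closure (circleOrbit T (T x)) ∪ (ℂ ∙ x : Submodule ℂ E)) :=
        interior_mono <| closure_minimal hsub <|
          isClosed_closure.union (Submodule.closed_of_finiteDimensional _)
    _ = interior (closure (circleOrbit T (T x))) :=
        interior_union_isClosed_of_interior_empty isClosed_closure hline

theorem interior_closure_circleOrbit_subset_pow_apply [T2Space E] (hlines : ∀ y : E, ℂ ∙ y ≠ ⊤)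
    (m : ℕ) :
    interior (closure (circleOrbit T x)) ⊆ interior (closure (circleOrbit T ((T ^ m) x))) := by
  induction m with
  | zero => simp
  | succ m ih =>
    refine ih.trans ?_
    rw [pow_succ']
    exact interior_closure_circleOrbit_subset_apply hlines

theorem mem_closure_circleOrbit_of_pow_apply_mem {S : E →L[ℂ] E} (hS : Commute S T) {m : ℕ}
    (htail : x ∈ closure (circleOrbit T ((T ^ m) x)))
    (h : (T ^ m) (S x) ∈ closure (circleOrbit T x)) : S x ∈ closure (circleOrbit T x) := by
  refine MapsTo.closure_left ?_ S.continuous isClosed_closure htail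
  rintro - ⟨l, hl, n, rfl⟩
  rw [map_smul, hS.apply_pow_apply, hS.apply_pow_apply]
  exact mapsTo_smul_pow_closure_circleOrbit hl n h

theorem mapsTo_closure_compl_of_commute (htail : ∀ m, x ∈ closure (circleOrbit T ((T ^ m) x)))
    {S : E →L[ℂ] E} (hS : Commute S T) (hSx : S x ∉ closure (circleOrbit T x)) :
    MapsTo S (closure (circleOrbit T x)) (closure (closure (circleOrbit T x))ᶜ) := by
  refine MapsTo.closure ?_ S.continuous
  rintro - ⟨l, hl, n, rfl⟩ hmem
  rw [map_smul, hS.apply_pow_apply] at hmem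
  have hl0 : l ≠ 0 := by rintro rfl; simp at hl
  refine hSx (mem_closure_circleOrbit_of_pow_apply_mem hS (htail n) ?_)
  simpa [smul_smul, inv_mul_cancel₀ hl0] using
    mapsTo_smul_pow_closure_circleOrbit (l := l⁻¹) (by simp [hl]) 0 hmem

theorem dense_range_sub_smul_one (h : (interior (closure (circleOrbit T x))).Nonempty) (β : ℂ) :
    Dense (range (T - β • (1 : E →L[ℂ] E))) := by
  set R : E →ₗ[ℂ] E := ↑(T - β • (1 : E →L[ℂ] E))
  set Y := (LinearMap.range R).topologicalClosure
  have : IsClosed (Y : Set E) := Submodule.isClosed_topologicalClosure _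
  have hsemiconj : Function.Semiconj Y.mkQ T (β • 1 : E ⧸ Y →L[ℂ] E ⧸ Y) := fun y ↦ by
    change Y.mkQ (T y) = β • Y.mkQ y
    rw [← map_smul, Submodule.mkQ_apply, Submodule.mkQ_apply, Submodule.Quotient.eq]
    exact Submodule.le_topologicalClosure _ (LinearMap.mem_range_self R y)
  have hY : Subsingleton (E ⧸ Y) := by
    refine subsingleton_of_nonempty_interior_closure_circleOrbit_smul_one β (Y.mkQ x) ?_
    rw [← image_circleOrbit _ hsemiconj]
    exact Y.isOpenMap_mkQ.nonempty_interior_closure_image continuous_quot_mk h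
  rw [Submodule.Quotient.subsingleton_iff] at hY
  have := Submodule.dense_iff_topologicalClosure_eq_top.2 hY
  rwa [LinearMap.coe_range, ContinuousLinearMap.coe_coe] at this

theorem dense_range_aeval_apply (h : (interior (closure (circleOrbit T x))).Nonempty) :
    Dense (range fun p : ℂ[X] ↦ aeval T p x) := by
  -- `V = {p(T) x | p}` as a submodule
  let V := LinearMap.range ((LinearMap.applyₗ x).comp
    ((ContinuousLinearMap.coeLM ℂ).comp (aeval T).toLinearMap))
  change Dense (V : Set E)
  rw [Submodule.dense_iff_topologicalClosure_eq_top]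
  refine Submodule.eq_top_of_nonempty_interior' _ (h.mono (interior_mono ?_))
  refine closure_minimal ?_ V.isClosed_topologicalClosure
  rintro - ⟨l, -, n, rfl⟩
  exact V.le_topologicalClosure (V.smul_mem l ⟨X ^ n, by simp [Module.End.pow_apply]⟩)

section BourdonFeldman

variable (hx : x ∈ interior (closure (circleOrbit T x)))
  (htail : ∀ m, x ∈ closure (circleOrbit T ((T ^ m) x)))
include htail

theorem mapsTo_sub_smul_one_closure_compl {γ : ℂ}
    (hγ : γ ∈ closure {γ' : ℂ | (T - γ' • 1 : E →L[ℂ] E) x ∉ closure (circleOrbit T x)}) :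
    MapsTo (T - γ • 1 : E →L[ℂ] E) (closure (circleOrbit T x))
      (closure (closure (circleOrbit T x))ᶜ) := by
  intro f hf
  have hcomm (γ' : ℂ) : Commute (T - γ' • 1) T :=
    (Commute.refl T).sub_left ((Commute.one_left T).smul_left γ')
  have hcont : Continuous fun γ' : ℂ ↦ (T - γ' • 1 : E →L[ℂ] E) f := by
    simpa using (show Continuous fun γ' : ℂ ↦ T f - γ' • f by fun_prop)
  have hsub : {γ' : ℂ | (T - γ' • 1 : E →L[ℂ] E) x ∉ closure (circleOrbit T x)} ⊆
      (fun γ' : ℂ ↦ (T - γ' • 1 : E →L[ℂ] E) f) ⁻¹' closure (closure (circleOrbit T x))ᶜ :=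
    fun γ' hγ' ↦ mapsTo_closure_compl_of_commute htail (hcomm γ') hγ' hf
  exact closure_minimal hsub (isClosed_closure.preimage hcont) hγ

include hx in
theorem not_mapsTo_sub_smul_one_closure_compl {γ : ℂ}
    (hγ : (T - γ • 1 : E →L[ℂ] E) x ∈ closure (circleOrbit T x)) :
    ¬ MapsTo (T - γ • 1 : E →L[ℂ] E) (closure (circleOrbit T x))
      (closure (closure (circleOrbit T x))ᶜ) := by
  intro hmaps
  rw [closure_compl] at hmaps
  obtain ⟨_, ⟨w, rfl⟩, hw⟩ := (dense_range_sub_smul_one ⟨x, hx⟩ γ).exists_mem_open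
    isOpen_interior ⟨x, hx⟩
  have hwF : w ∉ closure (circleOrbit T x) := fun hwF ↦ hmaps hwF hw
  -- some `p(T) x ∉ F` has `(T - γ) p(T) x ∈ int F`, but `p(T)` maps `(T - γ) x ∈ F` to `(int F)ᶜ`
  obtain ⟨_, ⟨p, rfl⟩, hpF, hpint⟩ := (dense_range_aeval_apply ⟨x, hx⟩).exists_mem_open
    (isClosed_closure.isOpen_compl.inter (isOpen_interior.preimage (T - γ • 1).continuous))
    ⟨w, hwF, hw⟩
  have hS := mapsTo_closure_compl_of_commute htail (commute_aeval_self T p) hpF hγ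
  rw [closure_compl] at hS
  have hpq := (Commute.all p (X - C γ)).map (aeval T)
  rw [map_sub, aeval_X, aeval_C, Algebra.algebraMap_eq_smul_one] at hpq
  exact hS (by rwa [← mul_apply_eq_comp, hpq.eq])

include hx

omit htail in
theorem exists_sub_smul_one_apply_mem :
    ∃ γ : ℂ, (T - γ • 1 : E →L[ℂ] E) x ∈ closure (circleOrbit T x) := by
  have hcont : Tendsto (fun ε : ℂ ↦ x - ε • T x) (𝓝[≠] 0) (𝓝 x) :=
    tendsto_nhdsWithin_of_tendsto_nhds <| by
      simpa using (show Continuous fun ε : ℂ ↦ x - ε • T x by fun_prop).tendsto 0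
  obtain ⟨ε, hε, hε0⟩ := ((hcont.eventually_mem (mem_interior_iff_mem_nhds.1 hx)).and
    self_mem_nhdsWithin).exists
  refine ⟨ε⁻¹, ?_⟩
  convert smul_mem_closure_circleOrbit hx (-ε⁻¹) hε using 1
  simp [smul_sub, smul_smul, inv_mul_cancel₀ hε0]
  abel

theorem sub_smul_one_apply_mem (β : ℂ) :
    (T - β • 1 : E →L[ℂ] E) x ∈ closure (circleOrbit T x) := by
  set Λ := {γ : ℂ | (T - γ • 1 : E →L[ℂ] E) x ∈ closure (circleOrbit T x)}
  have hΛ : IsClosed Λ := isClosed_closure.preimage <| by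
    simpa using (show Continuous fun γ : ℂ ↦ T x - γ • x by fun_prop)
  by_contra hβ
  obtain ⟨γ, hγ⟩ : (frontier Λ).Nonempty := nonempty_frontier_iff.2
    ⟨exists_sub_smul_one_apply_mem hx, (ne_univ_iff_exists_notMem _).2 ⟨β, hβ⟩⟩
  refine not_mapsTo_sub_smul_one_closure_compl hx htail (hΛ.frontier_subset hγ) ?_
  rw [← frontier_compl] at hγ
  exact mapsTo_sub_smul_one_closure_compl htail (frontier_subset_closure hγ)

theorem aeval_apply_mem_closure_circleOrbit (p : ℂ[X]) :
    aeval T p x ∈ closure (circleOrbit T x) := by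
  let M : Submonoid (ℂ[X]) :=
    { carrier := {p | MapsTo (aeval T p) (closure (circleOrbit T x))
        (closure (circleOrbit T x))}
      mul_mem' := fun hp hq ↦ by simpa [map_mul] using hp.comp hq
      one_mem' := by simpa using mapsTo_id _ }
  have hC (a : ℂ) : C a ∈ M := fun f hf ↦ by
    simpa [Algebra.algebraMap_eq_smul_one] using smul_mem_closure_circleOrbit hx a hf
  have hlin (r : ℂ) : X - C r ∈ M := by
    refine mapsTo_closure_circleOrbit_of_commute (commute_aeval_self T _) ?_
    simpa [Algebra.algebraMap_eq_smul_one] using sub_smul_one_apply_mem hx htail r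
  rw [← C_leadingCoeff_mul_prod_multiset_X_sub_C (p := p)
    IsAlgClosed.card_roots_eq_natDegree]
  refine M.mul_mem (hC _) (M.multiset_prod_mem _ fun q hq ↦ ?_)
    (subset_closure self_mem_circleOrbit)
  obtain ⟨r, -, rfl⟩ := Multiset.mem_map.1 hq
  exact hlin r

theorem dense_circleOrbit_of_mem_interior : Dense (circleOrbit T x) := by
  refine dense_iff_closure_eq.2 (eq_univ_of_univ_subset ?_)
  rw [← (dense_range_aeval_apply ⟨x, hx⟩).closure_eq]
  exact closure_minimal (range_subset_iff.2 (aeval_apply_mem_closure_circleOrbit hx htail))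
    isClosed_closure

end BourdonFeldman

theorem dense_circleOrbit_of_t2Space [T2Space E]
    (h : (interior (closure (circleOrbit T x))).Nonempty) : Dense (circleOrbit T x) := by
  by_cases hlines : ∀ y : E, ℂ ∙ y ≠ ⊤
  · obtain ⟨u, hu⟩ := h
    obtain ⟨_, hyint, l, hl, n, rfl⟩ :=
      mem_closure_iff.1 (interior_subset hu) _ isOpen_interior hu
    have hl0 : l ≠ 0 := by rintro rfl; simp at hl
    have hx' : (T ^ n) x ∈ interior (closure (circleOrbit T x)) := by
      simpa [smul_smul, inv_mul_cancel₀ hl0] using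
        smul_mem_interior_closure_circleOrbit (l := l⁻¹) (by simp [hl]) hyint
    have hsub := interior_closure_circleOrbit_subset_pow_apply (T := T) (x := x) hlines
    refine (dense_circleOrbit_of_mem_interior (hsub n hx') fun m ↦ ?_).mono
      (circleOrbit_pow_apply_subset n)
    have := interior_subset (hsub (m + n) hx')
    rwa [pow_add, mul_apply_eq_comp] at this
  · obtain ⟨w, hw⟩ := not_forall_not.1 hlines
    obtain ⟨μ, rfl⟩ := ContinuousLinearMap.exists_eq_smul_one_of_span_singleton_eq_top hw T
    have := subsingleton_of_nonempty_interior_closure_circleOrbit_smul_one μ x h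
    exact fun y ↦ subset_closure (Subsingleton.elim x y ▸ self_mem_circleOrbit)

theorem dense_circleOrbit_of_nonempty_interior_closure
    (h : (interior (closure (circleOrbit T x))).Nonempty) : Dense (circleOrbit T x) := by
  let π := SeparationQuotient.mkCLM ℂ E
  let S : SeparationQuotient E →L[ℂ] SeparationQuotient E :=
    SeparationQuotient.liftCLM (π ∘L T) fun y z hyz ↦
      SeparationQuotient.mk_eq_mk.2 (hyz.map T.continuous)
  have himage : π '' circleOrbit T x = circleOrbit S (π x) := image_circleOrbit π (fun _ ↦ rfl) x
  have hdense : Dense (π '' circleOrbit T x) := by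
    rw [himage]
    refine dense_circleOrbit_of_t2Space ?_
    rw [← himage]
    exact SeparationQuotient.isOpenMap_mk.nonempty_interior_closure_image
      SeparationQuotient.continuous_mk h
  exact SeparationQuotient.isInducing_mk.dense_iff.2 fun y ↦ hdense _

end OrbitClosure

/-- If the closure of `{λ T^n x : λ ∈ 𝕋, n ≥ 0}` has nonempty interior,
then `{λ T^n x : λ ∈ 𝕋, n ≥ 0}` is dense in `X`. -/
theorem stmt4 {X : Type*} [AddCommGroup X] [Module ℂ X] [TopologicalSpace X]
    [IsTopologicalAddGroup X] [ContinuousSMul ℂ X] (T : X →L[ℂ] X) (x : X)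
    (h : (interior (closure
      {y : X | ∃ l : ℂ, ‖l‖ = 1 ∧ ∃ n : ℕ, y = l • (T ^ n) x})).Nonempty) :
    Dense {y : X | ∃ l : ℂ, ‖l‖ = 1 ∧ ∃ n : ℕ, y = l • (T ^ n) x} :=
  dense_circleOrbit_of_nonempty_interior_closure h
end

section
/- Let G be an abelian topological group, let g, h ∈ G, let d ≥ 1 and m ≥ 1 be integers, and let (n_k) be a sequence of positive integers such that g^{n_k^j} → 1_G for every j with 1 ≤ j ≤ d−1 and g^{n_k^d} → h. Then g^{(n_k + m)^d} → h · g^{m^d}. -/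
open Filter Topology Finset

/-!
Expanding `(n + m)^d` by the binomial theorem writes `g^{(n + m)^d}` as the product over
`0 ≤ j ≤ d` of `(g^{n^j})^{m^{d-j} C(d, j)}`. Along `n = n_k` the factors with `0 < j < d` tend
to `1`, the factor with `j = d` tends to `h`, and the factor with `j = 0` is the constant
`g^{m^d}`.
-/

theorem pow_add_pow_eq_prod_range {M : Type*} [CommMonoid M] (g : M) (a b d : ℕ) :
    g ^ ((a + b) ^ d) = ∏ j ∈ range (d + 1), (g ^ a ^ j) ^ (b ^ (d - j) * d.choose j) := by
  rw [add_pow, ← prod_pow_eq_pow_sum]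
  refine prod_congr rfl fun j _ => ?_
  rw [← pow_mul, Nat.cast_id, mul_assoc]

theorem stmt5_general {G : Type*} [CommGroup G] [TopologicalSpace G] [IsTopologicalGroup G]
    (g h : G) (d m : ℕ) (hd : 1 ≤ d)
    (n : ℕ → ℕ)
    (hconv : ∀ j : ℕ, 1 ≤ j → j ≤ d - 1 →
      Tendsto (fun k => g ^ (n k ^ j)) atTop (nhds (1 : G)))
    (hlast : Tendsto (fun k => g ^ (n k ^ d)) atTop (nhds h)) :
    Tendsto (fun k => g ^ ((n k + m) ^ d)) atTop (nhds (h * g ^ (m ^ d))) := by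
  obtain ⟨e, rfl⟩ : ∃ e, d = e + 1 := ⟨d - 1, by omega⟩
  have middle : Tendsto (fun k => ∏ j ∈ range e,
      (g ^ n k ^ (j + 1)) ^ (m ^ (e + 1 - (j + 1)) * (e + 1).choose (j + 1))) atTop (𝓝 1) := by
    simpa using tendsto_finsetProd (range e) fun j hj =>
      (hconv (j + 1) (by omega) (by rw [mem_range] at hj; omega)).pow _
  simp_rw [pow_add_pow_eq_prod_range, prod_range_succ _ (e + 1), prod_range_succ']
  simpa [mul_comm h] using (middle.mul_const (g ^ m ^ (e + 1))).mul hlast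

/-- In an abelian topological group `G`, if `(n_k)` is a sequence of
positive integers with `g^{n_k^j} → 1` for `1 ≤ j ≤ d - 1` and `g^{n_k^d} → h`, then
`g^{(n_k + m)^d} → h * g^{m^d}`. -/
theorem stmt5 {G : Type*} [CommGroup G] [TopologicalSpace G] [IsTopologicalGroup G]
    (g h : G) (d m : ℕ) (hd : 1 ≤ d) (hm : 1 ≤ m)
    (n : ℕ → ℕ) (hn : ∀ k, 1 ≤ n k)
    (hconv : ∀ j : ℕ, 1 ≤ j → j ≤ d - 1 →
      Tendsto (fun k => g ^ (n k ^ j)) atTop (nhds (1 : G)))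
    (hlast : Tendsto (fun k => g ^ (n k ^ d)) atTop (nhds h)) :
    Tendsto (fun k => g ^ ((n k + m) ^ d)) atTop (nhds (h * g ^ (m ^ d))) :=
  stmt5_general g h d m hd n hconv hlast
end

section
/- Let X be a complex topological vector space, T a continuous linear operator on X, and x, y ∈ X. If the interior of the closure of {λ T^n x : λ ∈ 𝕋, n ≥ 0} and the interior of the closure of {λ T^n y : λ ∈ 𝕋, n ≥ 0} have nonempty intersection, then these two interiors are equal. -/
/-!
Write `O(x) = {λ • T^n x : λ ∈ 𝕋, n ≥ 0}`. The closure of `O(y)` is invariant under every map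
`λ • T^k`, so once some point `λ₀ • T^n x` of `O(x)` lies in `closure O(y)`, the whole tail
`{λ • T^m x : m ≥ n}` does, and `closure O(x)` is covered by `closure O(y)` together with the
finitely many circles `closure (𝕋 • T^m x)`, `m < n`. In the Hausdorff quotient a circle is
compact, and it contains no open set unless the quotient is trivial. So either `X` is indiscrete
and both interiors are `univ`, or the circles are closed with empty interior and do not
enlarge the interior of `closure O(y)`.
-/

open Set Filter Topology

section

variable {𝕜 X : Type*}

section Defs

variable (𝕜) [NormedField 𝕜] [AddCommGroup X] [Module 𝕜 X] [TopologicalSpace X]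

def unitSphereSMul (v : X) : Set X := {z | ∃ l : 𝕜, ‖l‖ = 1 ∧ z = l • v}

def scaledOrbit (T : X →L[𝕜] X) (x : X) : Set X :=
  {z | ∃ l : 𝕜, ‖l‖ = 1 ∧ ∃ n : ℕ, z = l • (T ^ n) x}

end Defs

theorem interior_biUnion_eq_empty_of_isClosed [TopologicalSpace X] {ι : Type*} (s : Finset ι)
    {f : ι → Set X} (hc : ∀ i ∈ s, IsClosed (f i)) (h : ∀ i ∈ s, interior (f i) = ∅) :
    interior (⋃ i ∈ s, f i) = ∅ := by
  classical
  induction s using Finset.induction_on with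
  | empty => simp
  | insert a s _ ih =>
    simp only [Finset.mem_insert, forall_eq_or_imp] at hc h
    rw [Finset.set_biUnion_insert, interior_union_isClosed_of_interior_empty hc.1 (ih hc.2 h.2),
      h.1]

section UnitSphere

variable [RCLike 𝕜] [AddCommGroup X] [Module 𝕜 X] [TopologicalSpace X]

theorem isCompact_unitSphereSMul [ContinuousSMul 𝕜 X] (v : X) :
    IsCompact (unitSphereSMul 𝕜 v) := by
  have : unitSphereSMul 𝕜 v = (· • v) '' Metric.sphere (0 : 𝕜) 1 := by
    ext z
    simp [unitSphereSMul, eq_comm]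
  rw [this]
  exact (isCompact_sphere 0 1).image (continuous_id.smul continuous_const)

theorem subsingleton_of_nonempty_interior_unitSphereSMul [ContinuousAdd X] [ContinuousSMul 𝕜 X]
    {v : X} (h : (interior (unitSphereSMul 𝕜 v)).Nonempty) : Subsingleton X := by
  rcases eq_or_ne v 0 with rfl | hv
  · have hbot : unitSphereSMul 𝕜 (0 : X) = ((⊥ : Submodule 𝕜 X) : Set X) := by
      ext z
      simp only [unitSphereSMul, smul_zero, Submodule.bot_coe, mem_singleton_iff, mem_ofPred_eq]
      exact ⟨fun ⟨_, _, hz⟩ => hz, fun hz => ⟨1, norm_one, hz⟩⟩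
    rw [hbot] at h
    exact (Submodule.subsingleton_iff 𝕜).1
      (subsingleton_iff_bot_eq_top.1 (Submodule.eq_top_of_nonempty_interior' _ h))
  · exfalso
    obtain ⟨u, hu⟩ := h
    -- `t • u` stays in the open set for real `t` near `1`, but leaves the unit sphere for `t > 1`.
    have hdil : Tendsto (fun t : ℝ => (t : 𝕜) • u) (𝓝[>] 1) (𝓝 u) :=
      ((RCLike.continuous_ofReal.smul continuous_const).tendsto' 1 u (by simp)).mono_left
        nhdsWithin_le_nhds
    obtain ⟨t, ht, ht1⟩ := ((hdil.eventually (isOpen_interior.mem_nhds hu)).and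
      self_mem_nhdsWithin).exists
    obtain ⟨μ, hμ, rfl⟩ := interior_subset hu
    obtain ⟨ν, hν, htμ⟩ := interior_subset ht
    have : (t : 𝕜) * μ = ν := smul_left_injective 𝕜 hv (by simpa [smul_smul] using htμ)
    have : |t| = 1 := by simpa [hμ, hν] using congrArg norm this
    linarith [le_abs_self t]

theorem indiscreteTopology_of_nonempty_interior_closure_unitSphereSMul
    [IsTopologicalAddGroup X] [ContinuousSMul 𝕜 X] {v : X}
    (h : (interior (closure (unitSphereSMul 𝕜 v))).Nonempty) : IndiscreteTopology X := by
  open SeparationQuotient in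
  have himage : mk '' unitSphereSMul 𝕜 v = unitSphereSMul 𝕜 (mk v) := by
    ext z
    simp [unitSphereSMul, ← mk_smul, eq_comm]
  have hopen : IsOpen (mk '' interior (closure (unitSphereSMul 𝕜 v))) :=
    isOpenMap_mk _ isOpen_interior
  have hsub : mk '' interior (closure (unitSphereSMul 𝕜 v)) ⊆ unitSphereSMul 𝕜 (mk v) :=
    calc mk '' interior (closure (unitSphereSMul 𝕜 v))
        ⊆ mk '' closure (unitSphereSMul 𝕜 v) := image_mono interior_subset
      _ = unitSphereSMul 𝕜 (mk v) := by
        rw [image_mk_closure, himage, (isCompact_unitSphereSMul _).isClosed.closure_eq]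
  exact subsingleton_iff.1 <| subsingleton_of_nonempty_interior_unitSphereSMul (𝕜 := 𝕜)
    ((h.image mk).mono (interior_maximal hsub hopen))

end UnitSphere

section ScaledOrbit

variable [AddCommGroup X] [TopologicalSpace X]

theorem self_mem_scaledOrbit [NormedField 𝕜] [Module 𝕜 X] (T : X →L[𝕜] X) (x : X) :
    x ∈ scaledOrbit 𝕜 T x :=
  ⟨1, norm_one, 0, by simp⟩

theorem smul_pow_apply_mem_closure_scaledOrbit [NormedField 𝕜] [Module 𝕜 X] [ContinuousSMul 𝕜 X]
    (T : X →L[𝕜] X) {y w : X} (hw : w ∈ closure (scaledOrbit 𝕜 T y)) {l : 𝕜} (hl : ‖l‖ = 1)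
    (k : ℕ) : l • (T ^ k) w ∈ closure (scaledOrbit 𝕜 T y) := by
  have hmaps : MapsTo (fun z => l • (T ^ k) z) (scaledOrbit 𝕜 T y) (scaledOrbit 𝕜 T y) := by
    rintro _ ⟨μ, hμ, n, rfl⟩
    refine ⟨l * μ, by rw [norm_mul, hl, hμ, one_mul], k + n, ?_⟩
    simp only [map_smul, smul_smul, pow_add, mul_apply_eq_comp]
  exact map_mem_closure (f := fun z => l • (T ^ k) z) (by fun_prop) hw hmaps

theorem scaledOrbit_subset_closure_union [NormedField 𝕜] [Module 𝕜 X] [ContinuousSMul 𝕜 X]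
    (T : X →L[𝕜] X) {x y : X} {n : ℕ} (hn : (T ^ n) x ∈ closure (scaledOrbit 𝕜 T y)) :
    scaledOrbit 𝕜 T x ⊆
      closure (scaledOrbit 𝕜 T y) ∪ ⋃ m ∈ Finset.range n, unitSphereSMul 𝕜 ((T ^ m) x) := by
  rintro _ ⟨l, hl, m, rfl⟩
  by_cases hm : n ≤ m
  · left
    have : (T ^ m) x = (T ^ (m - n)) ((T ^ n) x) := by
      rw [← mul_apply_eq_comp, ← pow_add, Nat.sub_add_cancel hm]
    rw [this]
    exact smul_pow_apply_mem_closure_scaledOrbit T hn hl _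
  · exact Or.inr (mem_biUnion (Finset.mem_range.2 (not_le.1 hm)) ⟨l, hl, rfl⟩)

theorem interior_closure_scaledOrbit_subset [RCLike 𝕜] [Module 𝕜 X] [IsTopologicalAddGroup X]
    [ContinuousSMul 𝕜 X] (T : X →L[𝕜] X) (x y : X)
    (h : (interior (closure (scaledOrbit 𝕜 T x)) ∩
      interior (closure (scaledOrbit 𝕜 T y))).Nonempty) :
    interior (closure (scaledOrbit 𝕜 T x)) ⊆ interior (closure (scaledOrbit 𝕜 T y)) := by
  obtain ⟨p, hpx, hpy⟩ := h
  obtain ⟨_, hy, l₀, hl₀, n, rfl⟩ := mem_closure_iff.1 (interior_subset hpx) _ isOpen_interior hpy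
  have hn : (T ^ n) x ∈ closure (scaledOrbit 𝕜 T y) := by
    have hl₀' : l₀ ≠ 0 := norm_ne_zero_iff.1 (hl₀ ▸ one_ne_zero)
    simpa [smul_smul, inv_mul_cancel₀ hl₀'] using smul_pow_apply_mem_closure_scaledOrbit T
      (interior_subset hy) (l := l₀⁻¹) (by rw [norm_inv, hl₀, inv_one]) 0
  by_cases hX : IndiscreteTopology X
  · rw [closure_indiscrete ⟨y, self_mem_scaledOrbit T y⟩, interior_univ]
    exact subset_univ _
  set F := ⋃ m ∈ Finset.range n, closure (unitSphereSMul 𝕜 ((T ^ m) x))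
  have hF : interior F = ∅ :=
    interior_biUnion_eq_empty_of_isClosed _ (fun _ _ => isClosed_closure) fun _ _ =>
      not_nonempty_iff_eq_empty.1
        (mt indiscreteTopology_of_nonempty_interior_closure_unitSphereSMul hX)
  have hcover : closure (scaledOrbit 𝕜 T x) ⊆ closure (scaledOrbit 𝕜 T y) ∪ F := by
    refine closure_minimal ((scaledOrbit_subset_closure_union T hn).trans ?_)
      (isClosed_closure.union ((Finset.range n).finite_toSet.isClosed_biUnion
        fun _ _ => isClosed_closure))
    exact union_subset_union_right _ (biUnion_mono subset_rfl fun _ _ => subset_closure)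
  calc interior (closure (scaledOrbit 𝕜 T x))
      ⊆ interior (closure (scaledOrbit 𝕜 T y) ∪ F) := interior_mono hcover
    _ = interior (closure (scaledOrbit 𝕜 T y)) :=
      interior_union_isClosed_of_interior_empty isClosed_closure hF

end ScaledOrbit

end

/-- If the interiors of the closures of `{λ T^n x : λ ∈ 𝕋, n ≥ 0}` and
`{λ T^n y : λ ∈ 𝕋, n ≥ 0}` intersect, then they are equal. -/
theorem stmt6 {X : Type*} [AddCommGroup X] [Module ℂ X] [TopologicalSpace X]
    [IsTopologicalAddGroup X] [ContinuousSMul ℂ X] (T : X →L[ℂ] X) (x y : X)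
    (h : (interior (closure
        {z : X | ∃ l : ℂ, ‖l‖ = 1 ∧ ∃ n : ℕ, z = l • (T ^ n) x}) ∩
      interior (closure
        {z : X | ∃ l : ℂ, ‖l‖ = 1 ∧ ∃ n : ℕ, z = l • (T ^ n) y})).Nonempty) :
    interior (closure
        {z : X | ∃ l : ℂ, ‖l‖ = 1 ∧ ∃ n : ℕ, z = l • (T ^ n) x}) =
      interior (closure
        {z : X | ∃ l : ℂ, ‖l‖ = 1 ∧ ∃ n : ℕ, z = l • (T ^ n) y}) :=
  (interior_closure_scaledOrbit_subset T x y h).antisymm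
    (interior_closure_scaledOrbit_subset T y x (inter_comm _ _ ▸ h))
end

section
/- Let T = 2B, where B is the unweighted backward shift on ℓ²(ℤ₊), and let (f(n)) be a sequence of positive integers such that f(n+1) > a·f(n) for all n ∈ ℕ, for some real number a > 1. Then for every x ∈ HC(T) there exists θ ∈ ℝ such that the set {e^{2πi f(n)θ} T^n x : n ≥ 1} is not dense in ℓ²(ℤ₊). -/
/-!
Only the zeroth coordinate matters. It equals `e^{2πi f(n)θ} c_n` with `c_n = (Tⁿx)₀`, so if
`f(n)θ + arg(c_n)/2π` stays at distance at least `δ` from `ℤ` for every `n ≥ 1`, it stays at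
distance at least `2δ` from `1` and the rotated orbit misses a ball around `e₀`.

Such a `θ` exists for every lacunary `f` and arbitrary phases, by nested intervals. Group the
indices into blocks `(km, km + m]` with `aᵐ` large. An interval of length `c / f(km)` splits into
`⌊f(km + m) / f(km)⌋` pieces of length `c / f(km + m)`; for each `n` in the block, the pieces
meeting `{θ | f(n)θ + βₙ is δ-close to ℤ}` are few, because `∑ f(n)` over the block is
`O(f(km + m))` and `∑ 1 / f(n)` is `O(1 / f(km))`. A union bound leaves a good piece.
-/

open Filter Finset

theorem card_int_le_of_forall_mem_Icc (s : Finset ℤ) {x y : ℝ} (hxy : x ≤ y)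
    (h : ∀ i ∈ s, x ≤ (i : ℝ) ∧ (i : ℝ) ≤ y) : (#s : ℝ) ≤ y - x + 1 := by
  have hsub : s ⊆ Icc ⌈x⌉ ⌊y⌋ := fun i hi =>
    mem_Icc.2 ⟨Int.ceil_le.2 (h i hi).1, Int.le_floor.2 (h i hi).2⟩
  have hle : ⌈x⌉ ≤ ⌊y⌋ + 1 := (Int.ceil_le_floor_add_one x).trans (by gcongr)
  calc (#s : ℝ) ≤ #(Icc ⌈x⌉ ⌊y⌋) := by exact_mod_cast card_le_card hsub
    _ = ((⌊y⌋ + 1 - ⌈x⌉ : ℤ) : ℝ) := by exact_mod_cast Int.card_Icc_of_le _ _ hle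
    _ ≤ y - x + 1 := by push_cast; linarith [Int.floor_le y, Int.le_ceil x]

theorem card_nat_le_of_forall_mem_Icc (s : Finset ℕ) {x y : ℝ} (hxy : x ≤ y)
    (h : ∀ i ∈ s, x ≤ (i : ℝ) ∧ (i : ℝ) ≤ y) : (#s : ℝ) ≤ y - x + 1 := by
  rw [← card_image_of_injective s (Nat.cast_injective (R := ℤ))]
  refine card_int_le_of_forall_mem_Icc _ hxy fun i hi => ?_
  obtain ⟨n, hn, rfl⟩ := mem_image.1 hi
  exact_mod_cast h n hn

theorem card_filter_le_two_mul_div_add_two (b w δ y : ℝ) (hw : 0 < w) (hδ : 0 ≤ δ) (M : ℕ) :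
    (#{i ∈ range M | b + ((i : ℕ) : ℝ) * w - δ ≤ y ∧ y ≤ b + (i + 1) * w + δ} : ℝ) ≤
      2 * δ / w + 2 := by
  have hxy : (y - b - δ) / w - 1 ≤ (y - b + δ) / w := by
    have : (y - b - δ) / w ≤ (y - b + δ) / w := by gcongr; linarith
    linarith
  calc _ ≤ (y - b + δ) / w - ((y - b - δ) / w - 1) + 1 :=
        card_nat_le_of_forall_mem_Icc _ hxy fun i hi => by
          obtain ⟨-, h1, h2⟩ := mem_filter.1 hi
          constructor
          · linarith [(div_le_iff₀ hw).2 (show y - b - δ ≤ (i + 1) * w by linarith)]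
          · exact (le_div_iff₀ hw).2 (by linarith)
    _ = 2 * δ / w + 2 := by field_simp; ring

open Classical in
noncomputable def hitPieces (M : ℕ) (u ℓ g β δ : ℝ) : Finset ℕ :=
  {i ∈ range M | ∃ θ ∈ Set.Icc (u + ((i : ℕ) : ℝ) * ℓ) (u + (i + 1) * ℓ), ∃ p : ℤ,
    |g * θ + β - p| ≤ δ}

theorem card_hitPieces_le (M : ℕ) (u ℓ g β δ : ℝ) (hg : 0 < g) (hℓ : 0 < ℓ) (hδ : 0 ≤ δ)
    (hδ' : δ ≤ 1 / 2) :
    (#(hitPieces M u ℓ g β δ) : ℝ) ≤ 2 * δ * M + 2 * M * (g * ℓ) + 4 * δ / (g * ℓ) + 4 := by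
  classical
  set b := g * u + β
  set w := g * ℓ
  have hw : 0 < w := mul_pos hg hℓ
  set P := Icc ⌈b - δ⌉ ⌊b + M * w + δ⌋
  set S : ℤ → Finset ℕ := fun p =>
    {i ∈ range M | b + ((i : ℕ) : ℝ) * w - δ ≤ p ∧ (p : ℝ) ≤ b + (i + 1) * w + δ}
  have hsub : hitPieces M u ℓ g β δ ⊆ P.biUnion S := by
    intro i hi
    obtain ⟨hiM, θ, ⟨hθl, hθr⟩, p, hp⟩ := mem_filter.1 hi
    have hlo : b + i * w ≤ g * θ + β := by nlinarith
    have hhi : g * θ + β ≤ b + (i + 1) * w := by nlinarith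
    have hp' := abs_le.1 hp
    have hiM' : (i : ℝ) + 1 ≤ M := by exact_mod_cast mem_range.1 hiM
    refine mem_biUnion.2 ⟨p, mem_Icc.2 ⟨Int.ceil_le.2 ?_, Int.le_floor.2 ?_⟩,
      mem_filter.2 ⟨hiM, by linarith, by linarith⟩⟩
    · nlinarith
    · nlinarith
  have hP : (#P : ℝ) ≤ M * w + 2 * δ + 1 := by
    have := card_int_le_of_forall_mem_Icc P (x := b - δ) (y := b + M * w + δ)
      (by nlinarith [M.cast_nonneg (α := ℝ)]) fun p hp => by
        obtain ⟨h1, h2⟩ := mem_Icc.1 hp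
        exact ⟨(Int.le_ceil _).trans (by exact_mod_cast h1),
          (Int.cast_le.2 h2).trans (Int.floor_le _)⟩
    linarith
  have hfac : 0 ≤ 2 * δ / w + 2 := by positivity
  calc _ ≤ (#(P.biUnion S) : ℝ) := by exact_mod_cast card_le_card hsub
    _ ≤ ∑ p ∈ P, (#(S p) : ℝ) := by exact_mod_cast card_biUnion_le
    _ ≤ #P * (2 * δ / w + 2) := by
      rw [← nsmul_eq_mul, ← sum_const]
      exact sum_le_sum fun p _ => card_filter_le_two_mul_div_add_two b w δ p hw hδ M
    _ ≤ (M * w + 2 * δ + 1) * (2 * δ / w + 2) := by gcongr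
    _ ≤ (M * w + 2) * (2 * δ / w + 2) := mul_le_mul_of_nonneg_right (by linarith) hfac
    _ = 2 * δ * M + 2 * M * w + 4 * δ / w + 4 := by field_simp; ring

theorem exists_piece_forall_far_from_int {ι : Type*} (J : Finset ι) (g β : ι → ℝ)
    (hg : ∀ j ∈ J, 0 < g j) (u ℓ δ : ℝ) (hℓ : 0 < ℓ) (hδ : 0 ≤ δ) (hδ' : δ ≤ 1 / 2) (M : ℕ)
    (hJ : ∑ j ∈ J, (2 * δ * M + 2 * M * (g j * ℓ) + 4 * δ / (g j * ℓ) + 4) < M) :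
    ∃ i < M, ∀ θ ∈ Set.Icc (u + i * ℓ) (u + (i + 1) * ℓ), ∀ j ∈ J, ∀ p : ℤ,
      δ < |g j * θ + β j - p| := by
  classical
  by_contra! hbad
  have hcover : range M ⊆ J.biUnion fun j => hitPieces M u ℓ (g j) (β j) δ := by
    intro i hi
    obtain ⟨θ, hθ, j, hj, p, hp⟩ := hbad i (mem_range.1 hi)
    exact mem_biUnion.2 ⟨j, hj, mem_filter.2 ⟨hi, θ, hθ, p, hp⟩⟩
  have := calc (M : ℝ) = #(range M) := by rw [card_range]
    _ ≤ #(J.biUnion fun j => hitPieces M u ℓ (g j) (β j) δ) := by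
      exact_mod_cast card_le_card hcover
    _ ≤ ∑ j ∈ J, (#(hitPieces M u ℓ (g j) (β j) δ) : ℝ) := by exact_mod_cast card_biUnion_le
    _ ≤ _ := sum_le_sum fun j hj => card_hitPieces_le M u ℓ (g j) (β j) δ (hg j hj) hℓ hδ hδ'
  linarith

theorem sub_one_mul_sum_Ioc_le_of_mul_le_succ (a : ℝ) (g : ℕ → ℝ) (hg : ∀ n, a * g n ≤ g (n + 1))
    (n t : ℕ) : (a - 1) * ∑ j ∈ Ioc n (n + t), g j ≤ a * g (n + t) - a * g n := by
  induction t with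
  | zero => simp
  | succ t ih =>
    rw [← add_assoc, sum_Ioc_succ_top (by omega), mul_add]
    linarith [hg (n + t)]

theorem sub_one_mul_sum_Ioc_le_of_mul_succ_le (a : ℝ) (h : ℕ → ℝ) (hh : ∀ n, a * h (n + 1) ≤ h n)
    (n t : ℕ) : (a - 1) * ∑ j ∈ Ioc n (n + t), h j ≤ h n - h (n + t) := by
  induction t with
  | zero => simp
  | succ t ih =>
    rw [← add_assoc, sum_Ioc_succ_top (by omega), mul_add]
    linarith [hh (n + t)]

theorem pow_mul_le_of_mul_le_succ {a : ℝ} (ha : 0 ≤ a) (g : ℕ → ℝ) (hg : ∀ n, a * g n ≤ g (n + 1))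
    (n t : ℕ) : a ^ t * g n ≤ g (n + t) := by
  induction t with
  | zero => simp
  | succ t ih =>
    calc a ^ (t + 1) * g n = a * (a ^ t * g n) := by ring
      _ ≤ a * g (n + t) := by gcongr
      _ ≤ g (n + (t + 1)) := hg (n + t)

theorem exists_forall_mem_of_nested_Icc (L : ℕ → ℝ) (hL : ∀ k, 0 ≤ L k) (good : ℕ → Set ℝ)
    (step : ∀ k u, ∃ u', Set.Icc u' (u' + L (k + 1)) ⊆ Set.Icc u (u + L k) ∧
      Set.Icc u' (u' + L (k + 1)) ⊆ good k) :
    ∃ θ, ∀ k, θ ∈ good k := by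
  choose next hnest hgood using step
  let u : ℕ → ℝ := fun k => Nat.rec 0 next k
  have hanti : Antitone fun k => Set.Icc (u k) (u k + L k) :=
    antitone_nat_of_succ_le fun k => hnest k (u k)
  have hmem := Set.mem_iInter.1 <|
    ciSup_mem_iInter_Icc_of_antitone_Icc hanti fun k => le_add_of_nonneg_right (hL k)
  exact ⟨⨆ k, u k, fun k => hgood k (u k) (hmem (k + 1))⟩

theorem sum_hit_bound_eq {ι : Type*} (J : Finset ι) (g : ι → ℝ) (M δ ℓ : ℝ) :
    ∑ j ∈ J, (2 * δ * M + 2 * M * (g j * ℓ) + 4 * δ / (g j * ℓ) + 4) =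
      #J * (2 * δ * M + 4) + 2 * M * ℓ * ∑ j ∈ J, g j + 4 * δ / ℓ * ∑ j ∈ J, 1 / g j := by
  simp only [sum_add_distrib, sum_const, nsmul_eq_mul, mul_sum]
  rw [sum_congr rfl fun j _ => (by ring : 2 * M * (g j * ℓ) = 2 * M * ℓ * g j),
    sum_congr rfl fun j _ =>
      (by rw [mul_comm (g j), ← div_div]; ring : 4 * δ / (g j * ℓ) = 4 * δ / ℓ * (1 / g j))]
  ring

theorem sum_Ioc_hit_bound_lt_floor_div (f : ℕ → ℕ) (hfpos : ∀ n, 1 ≤ f n) (a : ℝ) (ha : 1 < a)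
    (hf : ∀ n : ℕ, a * f n < f (n + 1)) (m : ℕ) (hm : 8 * m + 2 ≤ a ^ m) (c δ : ℝ) (hc : 0 < c)
    (hca : 8 * c * a ≤ a - 1) (hδ : 0 ≤ δ) (hδm : 16 * m * δ ≤ 1) (hδc : 32 * δ ≤ c * (a - 1))
    (n : ℕ) :
    ∑ j ∈ Ioc n (n + m), (2 * δ * ⌊(f (n + m) : ℝ) / f n⌋₊ +
        2 * ⌊(f (n + m) : ℝ) / f n⌋₊ * (f j * (c / f (n + m))) +
        4 * δ / (f j * (c / f (n + m))) + 4) < ⌊(f (n + m) : ℝ) / f n⌋₊ := by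
  have hpos : ∀ j, (0 : ℝ) < f j := fun j => by exact_mod_cast hfpos j
  have hf' : ∀ j, a * (f j : ℝ) ≤ f (j + 1) := fun j => (hf j).le
  have hX := sub_one_mul_sum_Ioc_le_of_mul_le_succ a _ hf' n m
  have hY := sub_one_mul_sum_Ioc_le_of_mul_succ_le a (fun j => 1 / (f j : ℝ)) (fun j => by
    rw [mul_one_div, div_le_div_iff₀ (hpos _) (hpos _)]; linarith [hf' j]) n m
  have hR := (le_div_iff₀ (hpos n)).2 (pow_mul_le_of_mul_le_succ (by linarith) _ hf' n m)
  have hRM := Nat.lt_floor_add_one ((f (n + m) : ℝ) / f n)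
  have hF := hpos n
  have hF' := hpos (n + m)
  rw [sum_hit_bound_eq, Nat.card_Ioc, Nat.add_sub_cancel_left]
  set F : ℝ := (f n : ℝ)
  set F' : ℝ := (f (n + m) : ℝ)
  set M := ⌊F' / F⌋₊
  set X := ∑ j ∈ Ioc n (n + m), (f j : ℝ)
  set Y := ∑ j ∈ Ioc n (n + m), 1 / (f j : ℝ)
  have hXc : 8 * c * X ≤ F' := by
    have : (a - 1) * (8 * c * X) ≤ (a - 1) * F' := by nlinarith
    exact le_of_mul_le_mul_left this (sub_pos.2 ha)
  have hYδ : 32 * δ * Y ≤ c / F := by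
    have hY' : (a - 1) * Y ≤ 1 / F := by linarith [one_div_pos.2 hF']
    have : (a - 1) * (32 * δ * Y) ≤ (a - 1) * (c / F) :=
      calc (a - 1) * (32 * δ * Y) = 32 * δ * ((a - 1) * Y) := by ring
        _ ≤ 32 * δ * (1 / F) := by gcongr
        _ ≤ c * (a - 1) * (1 / F) := by gcongr
        _ = (a - 1) * (c / F) := by ring
    exact le_of_mul_le_mul_left this (sub_pos.2 ha)
  have hMnn : (0 : ℝ) ≤ M := M.cast_nonneg
  have t1 : (m : ℝ) * (2 * δ * M) ≤ M / 8 := by nlinarith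
  have t2 : 2 * M * (c / F') * X ≤ M / 4 := by
    rw [mul_div_assoc', div_mul_eq_mul_div, div_le_iff₀ hF']; nlinarith
  have t3 : 4 * δ / (c / F') * Y ≤ F' / F / 8 := by
    calc 4 * δ / (c / F') * Y = F' / (8 * c) * (32 * δ * Y) := by field_simp; ring
      _ ≤ F' / (8 * c) * (c / F) := by gcongr
      _ = F' / F / 8 := by field_simp
  nlinarith

theorem exists_eight_mul_add_two_le_pow (a : ℝ) (ha : 1 < a) :
    ∃ m : ℕ, 1 ≤ m ∧ 8 * m + 2 ≤ a ^ m := by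
  obtain ⟨m, hm, hm1⟩ := (((tendsto_pow_const_div_const_pow_of_one_lt 1 ha).eventually
    (gt_mem_nhds (by norm_num : (0 : ℝ) < 1 / 10))).and (eventually_ge_atTop 1)).exists
  have hm1' : (1 : ℝ) ≤ m := by exact_mod_cast hm1
  rw [pow_one, div_lt_iff₀ (pow_pos (by linarith) m)] at hm
  exact ⟨m, hm1, by linarith⟩

theorem exists_Icc_subset_far_from_int_on_Ioc (f : ℕ → ℕ) (hfpos : ∀ n, 1 ≤ f n) (a : ℝ)
    (ha : 1 < a) (hf : ∀ n : ℕ, a * f n < f (n + 1)) (m : ℕ) (hm : 8 * m + 2 ≤ a ^ m)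
    (c δ : ℝ) (hc : 0 < c) (hca : 8 * c * a ≤ a - 1) (hδ : 0 ≤ δ) (hδm : 16 * m * δ ≤ 1)
    (hδc : 32 * δ ≤ c * (a - 1)) (β : ℕ → ℝ) (n : ℕ) (u : ℝ) :
    ∃ u', Set.Icc u' (u' + c / f (n + m)) ⊆ Set.Icc u (u + c / f n) ∧
      ∀ θ ∈ Set.Icc u' (u' + c / f (n + m)), ∀ j ∈ Ioc n (n + m), ∀ p : ℤ,
        δ < |f j * θ + β j - p| := by
  have hpos : ∀ j, (0 : ℝ) < f j := fun j => by exact_mod_cast hfpos j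
  have hm1 : (1 : ℝ) ≤ m := by
    rcases Nat.eq_zero_or_pos m with rfl | h
    · norm_num at hm
    · exact_mod_cast h
  set ℓ := c / f (n + m)
  have hℓ : 0 < ℓ := div_pos hc (hpos _)
  obtain ⟨i, hi, hfar⟩ := exists_piece_forall_far_from_int (Ioc n (n + m))
    (fun j => (f j : ℝ)) β (fun j _ => hpos j) u ℓ δ hℓ hδ (by nlinarith) _
    (sum_Ioc_hit_bound_lt_floor_div f hfpos a ha hf m hm c δ hc hca hδ hδm hδc n)
  have hMℓ : ⌊(f (n + m) : ℝ) / f n⌋₊ * ℓ ≤ c / f n := by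
    calc _ ≤ (f (n + m) : ℝ) / f n * ℓ :=
          mul_le_mul_of_nonneg_right (Nat.floor_le (by positivity)) hℓ.le
      _ = c / f n := by
        have := (hpos (n + m)).ne'
        simp only [ℓ]; field_simp
  have hi' : (i : ℝ) + 1 ≤ ⌊(f (n + m) : ℝ) / f n⌋₊ := by exact_mod_cast hi
  refine ⟨u + i * ℓ, Set.Icc_subset_Icc (by nlinarith) (by nlinarith), ?_⟩
  rw [show u + i * ℓ + ℓ = u + (i + 1) * ℓ by ring]
  exact hfar

theorem exists_far_from_int_of_lacunary (f : ℕ → ℕ) (hfpos : ∀ n, 1 ≤ f n) (a : ℝ) (ha : 1 < a)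
    (hf : ∀ n : ℕ, a * f n < f (n + 1)) (β : ℕ → ℝ) :
    ∃ δ > 0, ∃ θ : ℝ, ∀ n, 1 ≤ n → ∀ p : ℤ, δ ≤ |f n * θ + β n - p| := by
  obtain ⟨m, hm1, hm⟩ := exists_eight_mul_add_two_le_pow a ha
  have hm1' : (1 : ℝ) ≤ m := by exact_mod_cast hm1
  set c := (a - 1) / (8 * a)
  have hc : 0 < c := div_pos (by linarith) (by linarith)
  have hca : 8 * c * a ≤ a - 1 := le_of_eq (by simp only [c]; field_simp)
  set δ : ℝ := min (1 / (16 * (m : ℝ))) (c * (a - 1) / 32)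
  have hδ : 0 < δ := lt_min (by positivity) (by nlinarith)
  have hδm : 16 * m * δ ≤ 1 := by
    have := mul_le_mul_of_nonneg_left (min_le_left _ _ : δ ≤ _) (by positivity : (0 : ℝ) ≤ 16 * m)
    rwa [mul_one_div_cancel (by positivity)] at this
  have hδc : 32 * δ ≤ c * (a - 1) := by
    linarith [min_le_right (1 / (16 * (m : ℝ))) (c * (a - 1) / 32)]
  obtain ⟨θ, hθ⟩ := exists_forall_mem_of_nested_Icc (fun k => c / f (k * m))
    (fun k => div_nonneg hc.le (Nat.cast_nonneg _))
    (fun k => {θ | ∀ n ∈ Ioc (k * m) (k * m + m), ∀ p : ℤ, δ < |f n * θ + β n - p|})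
    (fun k u => by
      rw [add_one_mul k m]
      exact exists_Icc_subset_far_from_int_on_Ioc f hfpos a ha hf m hm c δ hc hca hδ.le hδm hδc
        β (k * m) u)
  refine ⟨δ, hδ, θ, fun n hn p => (hθ ((n - 1) / m) n ?_ p).le⟩
  have h1 := Nat.div_add_mod (n - 1) m
  have h2 := Nat.mod_lt (n - 1) (by omega : 0 < m)
  rw [mem_Ioc, mul_comm]
  omega

theorem norm_sub_le_two_mul_norm_smul_sub {E : Type*} [SeminormedAddCommGroup E] [NormedSpace ℝ E]
    {x y : E} (hx : ‖x‖ = 1) (hy : ‖y‖ = 1) {ρ : ℝ} (hρ : 0 ≤ ρ) : ‖x - y‖ ≤ 2 * ‖ρ • x - y‖ := by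
  have h : ‖x - ρ • x‖ = |‖ρ • x‖ - ‖y‖| := by
    rw [show x - ρ • x = (1 - ρ) • x by rw [sub_smul, one_smul], norm_smul, norm_smul, hx, hy,
      Real.norm_eq_abs, Real.norm_of_nonneg hρ, mul_one, mul_one, abs_sub_comm]
  calc ‖x - y‖ ≤ ‖x - ρ • x‖ + ‖ρ • x - y‖ := norm_sub_le_norm_sub_add_norm_sub _ _ _
    _ ≤ 2 * ‖ρ • x - y‖ := by rw [h]; linarith [abs_norm_sub_norm_le (ρ • x) y]

open Real in
theorem four_mul_abs_sub_round_le_norm_exp_sub_one (t : ℝ) :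
    4 * |t - round t| ≤ ‖Complex.exp (2 * π * Complex.I * t) - 1‖ := by
  have hr := abs_sub_round t
  have hsin : |sin (π * t)| = sin (π * |t - round t|) := by
    rw [show π * t = π * (t - round t) + round t * π by ring, sin_add_int_mul_pi, abs_mul,
      abs_zpow, abs_neg, abs_one, one_zpow, one_mul,
      abs_sin_eq_sin_abs_of_abs_le_pi (by rw [abs_mul, abs_of_pos pi_pos]; nlinarith [pi_pos]),
      abs_mul, abs_of_pos pi_pos]
  have hle : 2 / π * (π * |t - round t|) ≤ sin (π * |t - round t|) :=
    mul_le_sin (by positivity) (by nlinarith [pi_pos])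
  rw [show 2 * π * Complex.I * t = Complex.I * ((2 * π * t : ℝ) : ℂ) by push_cast; ring,
    Complex.norm_exp_I_mul_ofReal_sub_one, norm_mul, Real.norm_two, Real.norm_eq_abs,
    show 2 * π * t / 2 = π * t by ring, hsin]
  rw [show 2 / π * (π * |t - round t|) = 2 * |t - round t| by field_simp] at hle
  linarith

open Real in
theorem two_mul_abs_sub_round_le_norm_exp_mul_sub_one (s : ℝ) (z : ℂ) :
    2 * |s + z.arg / (2 * π) - round (s + z.arg / (2 * π))| ≤
      ‖Complex.exp (2 * π * Complex.I * s) * z - 1‖ := by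
  set t := s + z.arg / (2 * π)
  have hz : Complex.exp (2 * π * Complex.I * s) * z =
      ‖z‖ • Complex.exp (2 * π * Complex.I * t) := by
    nth_rw 1 [← Complex.norm_mul_exp_arg_mul_I z]
    rw [Complex.real_smul, mul_left_comm, ← Complex.exp_add]
    congr 2
    simp only [t]; push_cast; field_simp
  have hunit : ‖Complex.exp (2 * π * Complex.I * t)‖ = 1 := by
    rw [show 2 * π * Complex.I * t = ((2 * π * t : ℝ) : ℂ) * Complex.I by push_cast; ring]
    exact Complex.norm_exp_ofReal_mul_I _
  have := norm_sub_le_two_mul_norm_smul_sub hunit norm_one (norm_nonneg z)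
  rw [hz]
  linarith [four_mul_abs_sub_round_le_norm_exp_sub_one t]

theorem lp.not_dense_of_forall_le_norm_apply_sub {α : Type*} {E : α → Type*}
    [∀ i, NormedAddCommGroup (E i)] {p : ENNReal} [Fact (1 ≤ p)] (S : Set (lp E p)) (i : α)
    (z : E i) {r : ℝ} (hr : 0 < r) (h : ∀ y ∈ S, r ≤ ‖y i - z‖) : ¬ Dense S := by
  classical
  intro hS
  obtain ⟨y, hyS, hy⟩ := Metric.mem_closure_iff.1 (hS (lp.single p i z)) r hr
  have := lp.norm_apply_le_norm (zero_lt_one.trans_le Fact.out).ne' (y - lp.single p i z) i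
  rw [lp.coeFn_sub, Pi.sub_apply, lp.single_apply_self] at this
  rw [dist_comm, dist_eq_norm] at hy
  linarith [h y hyS]

theorem stmt13_general
    (T : lp (fun _ : ℕ => ℂ) 2 →L[ℂ] lp (fun _ : ℕ => ℂ) 2)
    (f : ℕ → ℕ) (hfpos : ∀ n, 1 ≤ f n)
    (a : ℝ) (ha : 1 < a) (hf : ∀ n : ℕ, a * f n < f (n + 1))
    (x : lp (fun _ : ℕ => ℂ) 2) :
    ∃ θ : ℝ, ¬ Dense {y : lp (fun _ : ℕ => ℂ) 2 | ∃ n : ℕ, 1 ≤ n ∧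
      y = Complex.exp (2 * Real.pi * Complex.I * (f n : ℂ) * (θ : ℂ)) • (T ^ n) x} := by
  obtain ⟨δ, hδ, θ, hθ⟩ := exists_far_from_int_of_lacunary f hfpos a ha hf
    fun n => (((T ^ n) x : ℕ → ℂ) 0).arg / (2 * Real.pi)
  refine ⟨θ, lp.not_dense_of_forall_le_norm_apply_sub _ 0 1 (by positivity : 0 < 2 * δ) ?_⟩
  rintro _ ⟨n, hn, rfl⟩
  calc 2 * δ ≤ 2 * |f n * θ + (((T ^ n) x : ℕ → ℂ) 0).arg / (2 * Real.pi) -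
        round (f n * θ + (((T ^ n) x : ℕ → ℂ) 0).arg / (2 * Real.pi))| := by
        gcongr; exact hθ n hn _
    _ ≤ ‖Complex.exp (2 * Real.pi * Complex.I * (f n * θ : ℝ)) * ((T ^ n) x : ℕ → ℂ) 0 - 1‖ :=
        two_mul_abs_sub_round_le_norm_exp_mul_sub_one _ _
    _ = _ := by rw [lp.coeFn_smul, Pi.smul_apply, smul_eq_mul]; push_cast; ring_nf

/-- Let `T = 2B` where `B` is the unweighted backward shift on
`ℓ²(ℤ₊)` (characterized by `(B x)(n) = x(n+1)`), and let `(f(n))` be a sequence of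
positive integers with `f(n+1) > a·f(n)` for all `n`, for some real `a > 1`. Then
for every `x ∈ HC(T)` there is `θ ∈ ℝ` such that
`{e^{2πi f(n)θ} T^n x : n ≥ 1}` is not dense in `ℓ²(ℤ₊)`. -/
theorem stmt13
    (B : lp (fun _ : ℕ => ℂ) 2 →L[ℂ] lp (fun _ : ℕ => ℂ) 2)
    (hB : ∀ (x : lp (fun _ : ℕ => ℂ) 2) (n : ℕ), (B x : ℕ → ℂ) n = (x : ℕ → ℂ) (n + 1))
    (T : lp (fun _ : ℕ => ℂ) 2 →L[ℂ] lp (fun _ : ℕ => ℂ) 2)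
    (hT : T = (2 : ℂ) • B)
    (f : ℕ → ℕ) (hfpos : ∀ n, 1 ≤ f n)
    (a : ℝ) (ha : 1 < a) (hf : ∀ n : ℕ, a * f n < f (n + 1))
    (x : lp (fun _ : ℕ => ℂ) 2)
    (hx : Dense (Set.range fun n : ℕ => (T ^ n) x)) :
    ∃ θ : ℝ, ¬ Dense {y : lp (fun _ : ℕ => ℂ) 2 | ∃ n : ℕ, 1 ≤ n ∧
      y = Complex.exp (2 * Real.pi * Complex.I * (f n : ℂ) * (θ : ℂ)) • (T ^ n) x} :=
  stmt13_general T f hfpos a ha hf x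
end

section
/- Let X be a complex Banach space, let T be a hypercyclic bounded linear operator on X, and let (f(n)) be a sequence of real numbers such that for some δ > 0, |f(n) − f(m)| > δ whenever n ≠ m. Then for every x ∈ HC(T), the set A = {θ ∈ ℝ : {(T^n x, e^{2πi f(n)θ}) : n ≥ 1} is dense in X × 𝕋} is residual in ℝ (contains a dense G_δ set) and its complement has Lebesgue measure zero. -/
/-!
The orbit of `x` is dense, so it visits every ball at an infinite set `N` of times, and on an
infinite set the `δ`-separated sequence `|f n|` is unbounded. If `|μ| r ≥ 2` and `ε ≤ 1 / 2`, the
`θ` for which `μ θ` lies within `ε` of a phase `s` modulo 1 fill a proportion at least `ε` of every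
interval of radius `r`. Hence the set of `θ` for which some `f n θ`, `n ∈ N`, is `ε`-close to `s`
modulo 1 is open and has density at least `ε` in every interval, so by the Lebesgue density
theorem its complement is null. Intersecting over balls around orbit points, rational phases and
tolerances `1 / (k + 1)` gives a countable intersection of open conull sets, all of whose points
are good `θ`.
-/

open Filter Topology MeasureTheory Metric Set

theorem Set.Infinite.exists_lt_abs_of_pairwise {f : ℕ → ℝ} {δ : ℝ} {N : Set ℕ}
    (hN : N.Infinite) (hδ : 0 < δ) (hf : N.Pairwise fun n m => δ < |f n - f m|) (C : ℝ) :
    ∃ n ∈ N, C < |f n| := by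
  by_contra! hC
  have hinj : N.InjOn fun n => ⌊f n / δ⌋ := by
    intro n hn m hm hnm
    by_contra hne
    have := Int.abs_sub_lt_one_of_floor_eq_floor hnm
    rw [← sub_div, abs_div, abs_of_pos hδ, div_lt_one hδ] at this
    exact (hf hn hm hne).not_gt this
  have hmaps : MapsTo (fun n => ⌊f n / δ⌋) N (Icc ⌊-C / δ⌋ ⌊C / δ⌋) := fun n hn =>
    have hn := abs_le.1 (hC n hn)
    ⟨Int.floor_mono (div_le_div_of_nonneg_right hn.1 hδ.le),
      Int.floor_mono (div_le_div_of_nonneg_right hn.2 hδ.le)⟩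
  exact infinite_of_injOn_mapsTo hinj hmaps hN (finite_Icc _ _)

theorem DenseRange.infinite_setOf_mem {X : Type*} [TopologicalSpace X] [T1Space X]
    [∀ x : X, (𝓝[≠] x).NeBot] {u : ℕ → X} (hu : DenseRange u) {U : Set X} (hU : IsOpen U)
    (hne : U.Nonempty) : {n | u n ∈ U}.Infinite := by
  intro hfin
  obtain ⟨_, hU', ⟨n, rfl⟩, hn⟩ :=
    (hu.sdiff_finite (hfin.image u)).inter_open_nonempty U hU hne
  exact hn ⟨n, hU', rfl⟩

theorem DenseRange.infinite_setOf_one_le_mem_ball {E : Type*} [NormedAddCommGroup E]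
    [NormedSpace ℝ E] {u : ℕ → E} (hu : DenseRange u) (y : E) {r : ℝ} (hr : 0 < r) :
    {n | 1 ≤ n ∧ u n ∈ ball y r}.Infinite := by
  rcases subsingleton_or_nontrivial E with hE | hE
  · convert Set.Ici_infinite 1 using 1
    ext n
    simp [Subsingleton.elim (u n) y, hr]
  · refine ((hu.infinite_setOf_mem isOpen_ball ⟨y, mem_ball_self hr⟩).sdiff
      (finite_singleton 0)).mono fun n hn => ⟨Nat.one_le_iff_ne_zero.2 hn.2, hn.1⟩

theorem measure_eq_zero_of_forall_measure_inter_closedBall_le {β : Type*} [MetricSpace β]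
    [MeasurableSpace β] [BorelSpace β] [SecondCountableTopology β] [HasBesicovitchCovering β]
    (μ : Measure β) [IsLocallyFiniteMeasure μ] {E : Set β} {c : ENNReal} (hc : c < 1)
    (h : ∀ x r, 0 < r → μ (E ∩ closedBall x r) ≤ c * μ (closedBall x r)) : μ E = 0 := by
  by_contra hE
  have : (ae (μ.restrict E)).NeBot := ae_neBot.2 (by rwa [Ne, Measure.restrict_eq_zero])
  obtain ⟨x, hx⟩ := (Besicovitch.ae_tendsto_measure_inter_div μ E).exists
  have hle : ∀ᶠ r in 𝓝[>] 0, μ (E ∩ closedBall x r) / μ (closedBall x r) ≤ c :=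
    eventually_nhdsWithin_of_forall fun r hr => ENNReal.div_le_of_le_mul (h x r hr)
  exact hc.not_ge (le_of_tendsto hx hle)

theorem AddCircle.dist_coe_le_abs_sub_add_int (t s : ℝ) (m : ℤ) :
    dist (t : AddCircle (1 : ℝ)) s ≤ |t - (s + m)| := by
  have hm : ((s + m : ℝ) : AddCircle (1 : ℝ)) = s := by
    rw [AddCircle.coe_add, (AddCircle.coe_eq_zero_iff (x := (m : ℝ)) 1).2 ⟨m, by simp⟩,
      add_zero]
  rw [← hm, dist_eq_norm, ← AddCircle.coe_sub]
  exact QuotientAddGroup.norm_mk_le_norm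

theorem ofReal_le_volume_closedBall_inter_dist_lt {ε R : ℝ} (hε : 0 < ε) (hε' : ε ≤ 1 / 2)
    (hR : 2 ≤ R) (b : ℝ) (s : AddCircle (1 : ℝ)) :
    ENNReal.ofReal (ε * (2 * R)) ≤
      volume (closedBall b R ∩ {t : ℝ | dist (t : AddCircle (1 : ℝ)) s < ε}) := by
  obtain ⟨s, rfl⟩ := QuotientAddGroup.mk_surjective s
  set I : ℤ → Set ℝ := fun m => Ioo (s + m - ε) (s + m + ε)
  set M := Finset.Icc ⌈b - R - s + ε⌉ ⌊b + R - s - ε⌋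
  have hsub :
      ⋃ m ∈ M, I m ⊆ closedBall b R ∩ {t : ℝ | dist (t : AddCircle (1 : ℝ)) s < ε} := by
    simp only [iUnion_subset_iff]
    intro m hm t ⟨ht₁, ht₂⟩
    rw [Finset.mem_Icc, Int.ceil_le, Int.le_floor] at hm
    refine ⟨?_, (AddCircle.dist_coe_le_abs_sub_add_int t s m).trans_lt ?_⟩
    · rw [mem_closedBall, Real.dist_eq, abs_le]; constructor <;> linarith
    · rw [abs_sub_lt_iff]; constructor <;> linarith
  have hdisj : (M : Set ℤ).PairwiseDisjoint I := by
    intro p _ q _ hpq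
    refine Set.disjoint_left.2 fun t ⟨hp₁, hp₂⟩ ⟨hq₁, hq₂⟩ => hpq ?_
    have : |((p - q : ℤ) : ℝ)| < 1 := by
      push_cast; rw [abs_lt]; constructor <;> linarith
    exact sub_eq_zero.1 (Int.abs_lt_one_iff.1 (by exact_mod_cast this))
  have hcard : R ≤ M.card := by
    have h₁ := Int.lt_floor_add_one (b + R - s - ε)
    have h₂ := Int.ceil_lt_add_one (b - R - s + ε)
    rw [Int.card_Icc]
    calc R ≤ ((⌊b + R - s - ε⌋ + 1 - ⌈b - R - s + ε⌉ : ℤ) : ℝ) := by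
          push_cast; linarith
      _ ≤ _ := by exact_mod_cast Int.self_le_toNat _
  calc ENNReal.ofReal (ε * (2 * R)) ≤ M.card * ENNReal.ofReal (2 * ε) := by
        rw [← ENNReal.ofReal_natCast, ← ENNReal.ofReal_mul (by positivity)]
        exact ENNReal.ofReal_le_ofReal (by nlinarith)
    _ = ∑ m ∈ M, volume (I m) := by
        have hI : ∀ m, volume (I m) = ENNReal.ofReal (2 * ε) := fun m => by
          rw [Real.volume_Ioo]; ring_nf
        simp only [hI, Finset.sum_const, nsmul_eq_mul]
    _ = volume (⋃ m ∈ M, I m) :=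
        (measure_biUnion_finset hdisj fun m _ => measurableSet_Ioo).symm
    _ ≤ _ := measure_mono hsub

theorem ofReal_le_volume_closedBall_inter_dist_mul_lt {μ ε r : ℝ} (hε : 0 < ε)
    (hε' : ε ≤ 1 / 2) (hμr : 2 ≤ |μ| * r) (c : ℝ) (s : AddCircle (1 : ℝ)) :
    ENNReal.ofReal (ε * (2 * r)) ≤
      volume (closedBall c r ∩ {θ : ℝ | dist ((μ * θ : ℝ) : AddCircle (1 : ℝ)) s < ε}) := by
  have hμ : μ ≠ 0 := by rintro rfl; norm_num at hμr
  have hpre : closedBall c r ∩ {θ : ℝ | dist ((μ * θ : ℝ) : AddCircle (1 : ℝ)) s < ε} =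
      (μ * ·) ⁻¹' (closedBall (μ * c) (|μ| * r) ∩
        {t : ℝ | dist (t : AddCircle (1 : ℝ)) s < ε}) := by
    ext θ
    simp only [mem_inter_iff, mem_preimage, mem_closedBall, mem_ofPred_eq, Real.dist_eq,
      ← mul_sub, abs_mul, mul_le_mul_iff_of_pos_left (abs_pos.2 hμ)]
  rw [hpre, Real.volume_preimage_mul_left hμ]
  calc ENNReal.ofReal (ε * (2 * r))
      = ENNReal.ofReal |μ⁻¹| * ENNReal.ofReal (ε * (2 * (|μ| * r))) := by
        rw [← ENNReal.ofReal_mul (abs_nonneg _), abs_inv]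
        congr 1
        field_simp
    _ ≤ _ := by gcongr; exact ofReal_le_volume_closedBall_inter_dist_lt hε hε' hμr _ _

def approxSet (f : ℕ → ℝ) (N : Set ℕ) (s : AddCircle (1 : ℝ)) (ε : ℝ) : Set ℝ :=
  {θ | ∃ n ∈ N, dist ((f n * θ : ℝ) : AddCircle (1 : ℝ)) s < ε}

theorem isOpen_approxSet (f : ℕ → ℝ) (N : Set ℕ) (s : AddCircle (1 : ℝ)) (ε : ℝ) :
    IsOpen (approxSet f N s ε) := by
  have : approxSet f N s ε =
      ⋃ n ∈ N, {θ : ℝ | dist ((f n * θ : ℝ) : AddCircle (1 : ℝ)) s < ε} := by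
    ext; simp [approxSet]
  rw [this]
  exact isOpen_biUnion fun n _ =>
    isOpen_lt (((AddCircle.continuous_mk' 1).comp (continuous_const_mul (f n))).dist
      continuous_const) continuous_const

theorem approxSet_mono (f : ℕ → ℝ) (N : Set ℕ) (s : AddCircle (1 : ℝ)) {ε ε' : ℝ}
    (h : ε ≤ ε') : approxSet f N s ε ⊆ approxSet f N s ε' :=
  fun _ ⟨n, hn, hθ⟩ => ⟨n, hn, hθ.trans_le h⟩

theorem volume_compl_approxSet {f : ℕ → ℝ} {δ : ℝ} {N : Set ℕ} (hN : N.Infinite)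
    (hδ : 0 < δ) (hf : N.Pairwise fun n m => δ < |f n - f m|) (s : AddCircle (1 : ℝ)) {ε : ℝ}
    (hε : 0 < ε) :
    volume (approxSet f N s ε)ᶜ = 0 := by
  set ε' := min ε (1 / 2)
  have hε' : 0 < ε' := lt_min hε one_half_pos
  have hε'₂ : ε' ≤ 1 / 2 := min_le_right _ _
  refine measure_mono_null
    (compl_subset_compl.2 (approxSet_mono f N s (min_le_left ε (1 / 2)))) ?_
  refine measure_eq_zero_of_forall_measure_inter_closedBall_le volume
    (ENNReal.ofReal_lt_one.2 (by linarith : 1 - ε' < 1)) fun c r hr => ?_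
  obtain ⟨n, hn, hfn⟩ := hN.exists_lt_abs_of_pairwise hδ hf (2 / r)
  have hlow : ENNReal.ofReal (ε' * (2 * r)) ≤ volume (closedBall c r ∩ approxSet f N s ε') :=
    (ofReal_le_volume_closedBall_inter_dist_mul_lt hε' hε'₂
      ((div_lt_iff₀ hr).1 hfn).le c s).trans
      (measure_mono (inter_subset_inter_right _ fun θ hθ => ⟨n, hn, hθ⟩))
  have hsplit := measure_sdiff_add_inter (μ := volume) (closedBall c r)
    (isOpen_approxSet f N s ε').measurableSet
  rw [Real.volume_closedBall] at hsplit
  rw [inter_comm, ← sdiff_eq, Real.volume_closedBall, ← ENNReal.ofReal_mul (by linarith)]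
  calc volume (closedBall c r \ approxSet f N s ε')
      ≤ ENNReal.ofReal (2 * r) - ENNReal.ofReal (ε' * (2 * r)) :=
        ENNReal.le_sub_of_add_le_right ENNReal.ofReal_ne_top (hsplit ▸ add_le_add_right hlow _)
    _ = ENNReal.ofReal ((1 - ε') * (2 * r)) := by
        rw [← ENNReal.ofReal_sub _ (by positivity)]; ring_nf

theorem dense_image_of_forall_mem_approxSet {X : Type*} [PseudoMetricSpace X] {u : ℕ → X}
    (hu : DenseRange u) (f : ℕ → ℝ) (S : Set ℕ) (θ : ℝ)
    (h : ∀ (m : ℕ) (q : ℚ) (k : ℕ),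
      θ ∈ approxSet f {n ∈ S | u n ∈ ball (u m) (1 / (k + 1))} (q : ℝ) (1 / (k + 1))) :
    Dense ((fun n => (u n, ((f n * θ : ℝ) : AddCircle (1 : ℝ)))) '' S) := by
  have hD : DenseRange (Prod.map u fun q : ℚ => ((q : ℝ) : AddCircle (1 : ℝ))) :=
    hu.prodMap (QuotientAddGroup.mk_surjective.denseRange.comp Rat.denseRange_cast
      (AddCircle.continuous_mk' 1))
  refine dense_closure.1 (hD.mono ?_)
  rintro _ ⟨⟨m, q⟩, rfl⟩
  refine Metric.mem_closure_iff.2 fun ε hε => ?_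
  obtain ⟨k, hk⟩ := exists_nat_one_div_lt hε
  obtain ⟨n, ⟨hnS, hn⟩, hθ⟩ := h m q k
  refine ⟨_, ⟨n, hnS, rfl⟩, ?_⟩
  change dist (u m, ((q : ℝ) : AddCircle (1 : ℝ)))
    (u n, ((f n * θ : ℝ) : AddCircle (1 : ℝ))) < ε
  rw [Prod.dist_eq, dist_comm, dist_comm ((q : ℝ) : AddCircle (1 : ℝ))]
  exact max_lt (hn.trans hk) (hθ.trans hk)

theorem mem_closure_exp_of_dense {X : Type*} [TopologicalSpace X] {u : ℕ → X} (f : ℕ → ℝ)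
    (θ : ℝ) (S : Set ℕ)
    (h : Dense ((fun n => (u n, ((f n * θ : ℝ) : AddCircle (1 : ℝ)))) '' S))
    (y : X) {z : ℂ} (hz : ‖z‖ = 1) :
    (y, z) ∈ closure {q : X × ℂ | ∃ n : ℕ, n ∈ S ∧ q = (u n,
      Complex.exp (2 * Real.pi * Complex.I * Complex.ofReal (f n) * (θ : ℂ)))} := by
  set Φ : X × AddCircle (1 : ℝ) → X × ℂ := Prod.map id fun w => (AddCircle.toCircle w : ℂ)
  have hΦ : Continuous Φ :=
    continuous_id.prodMap (continuous_subtype_val.comp AddCircle.continuous_toCircle)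
  obtain ⟨t, ht⟩ := Circle.exp_surjective ⟨z, mem_sphere_zero_iff_norm.2 hz⟩
  have hyz : (y, z) = Φ (y, ((t / (2 * Real.pi) : ℝ) : AddCircle (1 : ℝ))) := by
    have hzt : (Circle.exp t : ℂ) = z := by rw [ht]
    simp only [Φ, Prod.map, id, AddCircle.toCircle_apply_mk]
    rw [show 2 * Real.pi / 1 * (t / (2 * Real.pi)) = t by field_simp, hzt]
  have hmaps : Φ '' ((fun n => (u n, ((f n * θ : ℝ) : AddCircle (1 : ℝ)))) '' S) ⊆
      {q : X × ℂ | ∃ n : ℕ, n ∈ S ∧ q = (u n,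
        Complex.exp (2 * Real.pi * Complex.I * Complex.ofReal (f n) * (θ : ℂ)))} := by
    rintro _ ⟨_, ⟨n, hn, rfl⟩, rfl⟩
    refine ⟨n, hn, ?_⟩
    simp only [Φ, Prod.map, id, AddCircle.toCircle_apply_mk, Circle.coe_exp]
    push_cast
    ring_nf
  rw [hyz]
  exact closure_mono hmaps
    (image_closure_subset_closure_image hΦ ⟨_, h.closure_eq ▸ mem_univ _, rfl⟩)

theorem mem_residual_and_measure_compl_eq_zero_of_iInter_subset {ι X : Type*} [Countable ι]
    [TopologicalSpace X] [MeasurableSpace X] (μ : Measure X) [μ.IsOpenPosMeasure]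
    {O : ι → Set X} {A : Set X} (hO : ∀ i, IsOpen (O i)) (hnull : ∀ i, μ (O i)ᶜ = 0)
    (hA : ⋂ i, O i ⊆ A) : A ∈ residual X ∧ μ Aᶜ = 0 :=
  ⟨mem_of_superset (countable_iInter_mem.2 fun i =>
      residual_of_dense_open (hO i) (μ.dense_of_ae (mem_ae_iff.2 (hnull i)))) hA,
    measure_mono_null (compl_subset_compl.2 hA)
      (by rw [compl_iInter]; exact measure_iUnion_null hnull)⟩

theorem stmt17_general {X : Type*} [NormedAddCommGroup X] [NormedSpace ℂ X]
    (T : X →L[ℂ] X) (f : ℕ → ℝ) (δ : ℝ) (hδ : 0 < δ)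
    (hf : ∀ n m : ℕ, n ≠ m → δ < |f n - f m|)
    (x : X) (hx : Dense (Set.range fun n : ℕ => (T ^ n) x)) :
    {θ : ℝ | ∀ (y : X) (z : ℂ), ‖z‖ = 1 →
        (y, z) ∈ closure {q : X × ℂ | ∃ n : ℕ, 1 ≤ n ∧
          q = ((T ^ n) x,
            Complex.exp (2 * Real.pi * Complex.I * Complex.ofReal (f n) * (θ : ℂ)))}}
      ∈ residual ℝ ∧
    MeasureTheory.volume
      {θ : ℝ | ∀ (y : X) (z : ℂ), ‖z‖ = 1 →
        (y, z) ∈ closure {q : X × ℂ | ∃ n : ℕ, 1 ≤ n ∧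
          q = ((T ^ n) x,
            Complex.exp (2 * Real.pi * Complex.I * Complex.ofReal (f n) * (θ : ℂ)))}}ᶜ
      = 0 := by
  set u : ℕ → X := fun n => (T ^ n) x
  set N : ℕ → ℕ → Set ℕ := fun m k => {n | 1 ≤ n ∧ u n ∈ ball (u m) (1 / (k + 1))}
  have hN : ∀ m k, (N m k).Infinite := fun m k =>
    DenseRange.infinite_setOf_one_le_mem_ball hx (u m) Nat.one_div_pos_of_nat
  refine mem_residual_and_measure_compl_eq_zero_of_iInter_subset volume
    (O := fun i : ℕ × ℚ × ℕ => approxSet f (N i.1 i.2.2) (i.2.1 : ℝ) (1 / (i.2.2 + 1)))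
    (fun _ => isOpen_approxSet _ _ _ _)
    (fun i => volume_compl_approxSet (hN _ _) hδ (fun n _ m _ => hf n m) _
      Nat.one_div_pos_of_nat)
    fun θ hθ y z hz => ?_
  exact mem_closure_exp_of_dense f θ {n | 1 ≤ n}
    (dense_image_of_forall_mem_approxSet hx f _ θ fun m q k => mem_iInter.1 hθ (m, q, k)) y hz

/-- Let `X` be a complex Banach space, `T` a hypercyclic bounded
linear operator on `X`, and `(f(n))` a sequence of reals with `|f(n) − f(m)| > δ`
for `n ≠ m`, for some `δ > 0`. Then for every `x ∈ HC(T)` the set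
`A = {θ ∈ ℝ : {(T^n x, e^{2πi f(n)θ}) : n ≥ 1} is dense in X × 𝕋}` is residual in
`ℝ` and its complement has Lebesgue measure zero. -/
theorem stmt17 {X : Type*} [NormedAddCommGroup X] [NormedSpace ℂ X] [CompleteSpace X]
    (T : X →L[ℂ] X) (f : ℕ → ℝ) (δ : ℝ) (hδ : 0 < δ)
    (hf : ∀ n m : ℕ, n ≠ m → δ < |f n - f m|)
    (x : X) (hx : Dense (Set.range fun n : ℕ => (T ^ n) x)) :
    {θ : ℝ | ∀ (y : X) (z : ℂ), ‖z‖ = 1 →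
        (y, z) ∈ closure {q : X × ℂ | ∃ n : ℕ, 1 ≤ n ∧
          q = ((T ^ n) x,
            Complex.exp (2 * Real.pi * Complex.I * Complex.ofReal (f n) * (θ : ℂ)))}}
      ∈ residual ℝ ∧
    MeasureTheory.volume
      {θ : ℝ | ∀ (y : X) (z : ℂ), ‖z‖ = 1 →
        (y, z) ∈ closure {q : X × ℂ | ∃ n : ℕ, 1 ≤ n ∧
          q = ((T ^ n) x,
            Complex.exp (2 * Real.pi * Complex.I * Complex.ofReal (f n) * (θ : ℂ)))}}ᶜ
      = 0 :=
  stmt17_general T f δ hδ hf x hx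
end

section
/- Let X be a complex Banach space and let T be a hypercyclic bounded linear operator on X. Then for every x ∈ HC(T), the set B of sequences (λ_1, λ_2, …) ∈ 𝕋^ℕ such that {λ_n T^n x : n ≥ 1} is dense in X is residual in 𝕋^ℕ equipped with the product topology. -/
/-!
A set of sequences `Λ` making `{g n (Λ n) : n ≥ N}` dense is the countable intersection, over the
sets `V` of a countable basis, of the open sets `{Λ | ∃ n ≥ N, g n (Λ n) ∈ V}`. Each of these is
dense because a basic open set of the product only constrains finitely many coordinates, while
the tails of the orbit of a hypercyclic vector are still dense; so one may freely change `Λ` at a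
single late coordinate `n` (to `1`, if `T ^ n x ∈ V`).
-/

open Filter Topology Set TopologicalSpace

theorem tendsto_update_atTop_nhds {K : Type*} [TopologicalSpace K] (Λ c : ℕ → K) :
    Tendsto (fun n => Function.update Λ n (c n)) atTop (𝓝 Λ) :=
  tendsto_pi_nhds.2 fun i => tendsto_const_nhds.congr' <|
    (eventually_gt_atTop i).mono fun _ hn => (Function.update_of_ne hn.ne _ _).symm

section TailRange

variable {K X : Type*} [TopologicalSpace K] [TopologicalSpace X] (g : ℕ → K → X) (N : ℕ)

theorem isOpen_setOf_exists_mem_of_continuous (hg : ∀ n, Continuous (g n)) {V : Set X}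
    (hV : IsOpen V) : IsOpen {Λ : ℕ → K | ∃ n, N ≤ n ∧ g n (Λ n) ∈ V} := by
  have : {Λ : ℕ → K | ∃ n, N ≤ n ∧ g n (Λ n) ∈ V} = ⋃ n ≥ N, (fun Λ => g n (Λ n)) ⁻¹' V := by
    ext; simp
  rw [this]
  exact isOpen_biUnion fun n _ => hV.preimage ((hg n).comp (continuous_apply n))

theorem dense_setOf_exists_mem_of_dense_tail (hdense : ∀ M, Dense (⋃ n ≥ M, range (g n)))
    {V : Set X} (hV : IsOpen V) (hne : V.Nonempty) :
    Dense {Λ : ℕ → K | ∃ n, N ≤ n ∧ g n (Λ n) ∈ V} := by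
  classical
  have hfreq : ∃ᶠ n in atTop, ∃ c, g n c ∈ V := frequently_atTop.2 fun M => by
    obtain ⟨_, hyV, hy⟩ := (hdense M).inter_open_nonempty V hV hne
    simp only [mem_iUnion, mem_range] at hy
    obtain ⟨n, hn, c, rfl⟩ := hy
    exact ⟨n, hn, c, hyV⟩
  refine dense_iff_inter_open.2 fun W hW ⟨Λ, hΛ⟩ => ?_
  let c n := if h : ∃ c, g n c ∈ V then h.choose else Λ n
  have hnear : ∀ᶠ n in atTop, Function.update Λ n (c n) ∈ W :=
    tendsto_update_atTop_nhds Λ c (hW.mem_nhds hΛ)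
  obtain ⟨n, hnW, hNn, hnV⟩ :=
    (hnear.and_frequently ((eventually_ge_atTop N).and_frequently hfreq)).exists
  refine ⟨_, hnW, n, hNn, ?_⟩
  rw [Function.update_self]
  simpa only [c, dif_pos hnV] using hnV.choose_spec

theorem setOf_dense_tail_mem_residual [SecondCountableTopology X] (hg : ∀ n, Continuous (g n))
    (hdense : ∀ M, Dense (⋃ n ≥ M, range (g n))) :
    {Λ : ℕ → K | Dense {y | ∃ n, N ≤ n ∧ y = g n (Λ n)}} ∈ residual (ℕ → K) := by
  have hres : (⋂ V ∈ countableBasis X, {Λ : ℕ → K | ∃ n, N ≤ n ∧ g n (Λ n) ∈ V}) ∈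
      residual (ℕ → K) :=
    (countable_bInter_mem (countable_countableBasis X)).2 fun V hV =>
      residual_of_dense_open (isOpen_setOf_exists_mem_of_continuous g N hg
        (isOpen_of_mem_countableBasis hV))
        (dense_setOf_exists_mem_of_dense_tail g N hdense (isOpen_of_mem_countableBasis hV)
          (nonempty_of_mem_countableBasis hV))
  refine mem_of_superset hres fun Λ hΛ => (isBasis_countableBasis X).dense_iff.2 fun V hV _ => ?_
  obtain ⟨n, hn, hmem⟩ := mem_iInter₂.1 hΛ V hV
  exact ⟨_, hmem, n, hn, rfl⟩

end TailRange

theorem DenseRange.dense_image_Ici {X : Type*} [TopologicalSpace X] [T1Space X]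
    [∀ x : X, (𝓝[≠] x).NeBot] {f : ℕ → X} (hf : DenseRange f) (N : ℕ) : Dense (f '' Ici N) :=
  (hf.sdiff_finite ((finite_Iio N).image f)).mono <| by
    rintro _ ⟨⟨n, rfl⟩, hnot⟩
    exact ⟨n, mem_Ici.2 <| not_lt.1 fun h => hnot ⟨n, h, rfl⟩, rfl⟩

theorem stmt19_general {X : Type*} [NormedAddCommGroup X] [NormedSpace ℂ X]
    (T : X →L[ℂ] X) (x : X)
    (hx : Dense (Set.range fun n : ℕ => (T ^ n) x)) :
    {Λ : ℕ → {z : ℂ // ‖z‖ = 1} |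
        Dense {y : X | ∃ n : ℕ, 1 ≤ n ∧ y = (Λ n : ℂ) • (T ^ n) x}}
      ∈ residual (ℕ → {z : ℂ // ‖z‖ = 1}) := by
  rcases subsingleton_or_nontrivial X with _ | _
  · exact univ_mem' fun Λ => dense_indiscrete ⟨_, 1, le_rfl, rfl⟩
  have : SeparableSpace X := ⟨⟨_, countable_range _, hx⟩⟩
  refine setOf_dense_tail_mem_residual (fun n (c : {z : ℂ // ‖z‖ = 1}) => (c : ℂ) • (T ^ n) x) 1
    (fun n => continuous_subtype_val.smul continuous_const) fun M => ?_
  refine (DenseRange.dense_image_Ici hx M).mono ?_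
  rintro _ ⟨n, hn, rfl⟩
  exact mem_biUnion hn ⟨⟨1, norm_one⟩, one_smul ℂ _⟩

/-- Let `X` be a complex Banach space and `T` a hypercyclic bounded
linear operator on `X`. Then for every `x ∈ HC(T)`, the set of sequences
`Λ = (λ_n) ∈ 𝕋^ℕ` such that `{λ_n T^n x : n ≥ 1}` is dense in `X` is residual in
`𝕋^ℕ` (with the product topology). -/
theorem stmt19 {X : Type*} [NormedAddCommGroup X] [NormedSpace ℂ X] [CompleteSpace X]
    (T : X →L[ℂ] X) (x : X)
    (hx : Dense (Set.range fun n : ℕ => (T ^ n) x)) :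
    {Λ : ℕ → {z : ℂ // ‖z‖ = 1} |
        Dense {y : X | ∃ n : ℕ, 1 ≤ n ∧ y = (Λ n : ℂ) • (T ^ n) x}}
      ∈ residual (ℕ → {z : ℂ // ‖z‖ = 1}) :=
  stmt19_general T x hx
end
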